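/- arXiv:2605.06349 — 11 statements merged into one kernel-verified Lean document; each statement's English description precedes it below -/
import Mathlib

section
/- For every symmetric positive semidefinite matrix K ∈ ℝ^{N×N} and every tolerance ε > 0, there exist an integer m ≤ rank(K), matrices L, B ∈ ℝ^{N×m}, and indices p_1, …, p_m ∈ {1,…,N} such that: (i) K − L Lᵀ is positive semidefinite, (ii) trace(K − L Lᵀ) ≤ ε, (iii) Bᵀ L = I_m, (iv) K B = L, and (v) the column space of B equals span{e_{p_1}, …, e_{p_m}}, where e_i denotes the i-th standard basis vector of ℝ^N. -/
open Matrix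

/-- Existence content of the pivoted Cholesky decomposition with biorthogonal
basis (Theorem 3.1): for every symmetric positive semidefinite `K` and every
tolerance `ε > 0` there are `m ≤ rank K`, matrices `L, B ∈ ℝ^{N×m}` and pivot
indices `p₁,…,p_m` with `K - L Lᵀ ⪰ 0`, `trace (K - L Lᵀ) ≤ ε`, `Bᵀ L = I`,
`K B = L`, and the column space of `B` equal to `span {e_{p₁},…,e_{p_m}}`. -/
theorem pivoted_cholesky_existence (N : ℕ) (K : Matrix (Fin N) (Fin N) ℝ)
    (hK : K.PosSemidef) (ε : ℝ) (hε : 0 < ε) :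
    ∃ (m : ℕ) (L B : Matrix (Fin N) (Fin m) ℝ) (p : Fin m → Fin N),
      m ≤ K.rank ∧
      (K - L * Lᵀ).PosSemidef ∧
      (K - L * Lᵀ).trace ≤ ε ∧
      Bᵀ * L = 1 ∧
      K * B = L ∧
      LinearMap.range B.mulVecLin =
        Submodule.span ℝ
          (Set.range fun i : Fin m => (Pi.single (p i) (1 : ℝ) : Fin N → ℝ)) := by
  classical
  have hT : ∀ {a b : ℕ} (X : Matrix (Fin a) (Fin b) ℝ), Xᴴ = Xᵀ := by
    intro a b X; ext i j; simp [Matrix.conjTranspose_apply]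
  obtain ⟨C, hC⟩ : ∃ C : Matrix (Fin N) (Fin N) ℝ, K = Cᴴ * C := by
    open scoped MatrixOrder Matrix.Norms.L2Operator in
    exact CStarAlgebra.nonneg_iff_eq_star_mul_self.mp hK.nonneg
  rw [hT] at hC
  set r := K.rank with hr
  -- pick a linearly independent spanning set of columns
  obtain ⟨t, hts, htspan, htli⟩ := exists_linearIndependent ℝ (Set.range Cᵀ)
  have htfin : t.Finite := htli.finite
  haveI : Fintype t := htfin.fintype
  have hcard : Fintype.card t = r := by
    rw [← Set.toFinset_card]
    have h1 : Module.finrank ℝ (Submodule.span ℝ (t : Set (Fin N → ℝ))) = t.toFinset.card :=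
      finrank_span_set_eq_card htli
    rw [htspan] at h1
    rw [← h1, hr, hC, Matrix.rank_transpose_mul_self, Matrix.rank_eq_finrank_span_cols]
    rfl
  have e : Fin r ≃ t := (Fintype.equivFinOfCardEq hcard).symm
  have hp : ∀ i : Fin r, ∃ j : Fin N, Cᵀ j = (e i : Fin N → ℝ) := fun i => hts (e i).2
  choose p hp using hp
  set M : Matrix (Fin N) (Fin r) ℝ := C.submatrix id p with hMdef
  have hMt : ∀ j, Mᵀ j = (e j : Fin N → ℝ) := by
    intro j; rw [← hp j]; rfl
  have hMli : LinearIndependent ℝ (fun j => Mᵀ j) := by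
    have : (fun j => Mᵀ j) = (Subtype.val ∘ e) := funext hMt
    rw [this]
    exact htli.comp e e.injective
  have hMrange : Set.range Mᵀ = t := by
    rw [funext hMt]
    show Set.range (Subtype.val ∘ e) = t
    rw [Set.range_comp, Set.range_eq_univ.mpr e.surjective, Set.image_univ,
      Subtype.range_coe]
  set A : Matrix (Fin r) (Fin r) ℝ := Mᵀ * M with hAdef
  have hApos : A.PosDef := by
    refine Matrix.posDef_iff_dotProduct_mulVec.mpr ⟨?_, ?_⟩
    · show Aᴴ = A
      rw [hT, Matrix.transpose_mul, Matrix.transpose_transpose]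
    · intro x hx
      have h1 : star x ⬝ᵥ A *ᵥ x = (M *ᵥ x) ⬝ᵥ (M *ᵥ x) := by
        rw [star_trivial, hAdef, ← Matrix.mulVec_mulVec, Matrix.dotProduct_mulVec,
          Matrix.vecMul_transpose]
      rw [h1]
      have hMx : M *ᵥ x ≠ 0 := by
        intro h
        exact hx (Matrix.mulVec_injective_iff.mpr hMli (by simpa using h))
      have hnn : 0 ≤ (M *ᵥ x) ⬝ᵥ (M *ᵥ x) :=
        Finset.sum_nonneg fun i _ => mul_self_nonneg _
      rcases hnn.lt_or_eq with h | h
      · exact h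
      · exact absurd (dotProduct_self_eq_zero.mp h.symm) hMx
  have hAunit : IsUnit A.det := hApos.det_pos.ne'.isUnit
  have hAinv : A⁻¹.PosSemidef := hApos.inv.posSemidef
  obtain ⟨R, hR⟩ : ∃ R : Matrix (Fin r) (Fin r) ℝ, A⁻¹ = Rᴴ * R := by
    open scoped MatrixOrder Matrix.Norms.L2Operator in
    exact CStarAlgebra.nonneg_iff_eq_star_mul_self.mp hAinv.nonneg
  rw [hT] at hR
  have hRunit : IsUnit R.det := by
    have : A⁻¹.det ≠ 0 := hApos.inv.det_pos.ne'
    rw [hR, Matrix.det_mul, Matrix.det_transpose] at this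
    exact (mul_ne_zero_iff.mp this).2.isUnit
  set P : Matrix (Fin N) (Fin r) ℝ := Matrix.of fun i j => if p j = i then 1 else 0 with hPdef
  have hCP : C * P = M := by
    ext i j
    simp only [Matrix.mul_apply, hPdef, Matrix.of_apply, mul_ite, mul_one, mul_zero]
    rw [Finset.sum_ite_eq (Finset.univ) (p j) (fun k => C i k)]
    simp [hMdef]
  have hKP : K * P = Cᵀ * M := by rw [hC, Matrix.mul_assoc, hCP]
  have hPK : Pᵀ * K = Mᵀ * C := by
    rw [hC, ← Matrix.mul_assoc, ← Matrix.transpose_mul, hCP]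
  -- W with M * W = C
  have hW : ∀ j : Fin N, ∃ w : Fin r → ℝ, M *ᵥ w = Cᵀ j := by
    intro j
    have h1 : Cᵀ j ∈ Submodule.span ℝ (Set.range Cᵀ) :=
      Submodule.subset_span (Set.mem_range_self j)
    rw [← htspan, ← hMrange] at h1
    change Cᵀ j ∈ Submodule.span ℝ (Set.range M.col) at h1
    rw [← Matrix.range_mulVecLin] at h1
    exact h1
  choose w hw using hW
  set W : Matrix (Fin r) (Fin N) ℝ := Matrix.of fun k j => w j k with hWdef
  have hMW : M * W = C := by
    ext i j
    have := congrFun (hw j) i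
    simpa [Matrix.mul_apply, Matrix.mulVec, dotProduct, hWdef] using this
  have hMC : Mᵀ * C = A * W := by rw [← hMW, Matrix.mul_assoc]
  have hkey : K * P * A⁻¹ * (Pᵀ * K) = K := by
    rw [hKP, hPK, hMC, Matrix.mul_assoc, ← Matrix.mul_assoc A⁻¹, Matrix.nonsing_inv_mul A hAunit,
      Matrix.one_mul, Matrix.mul_assoc, hMW, ← hC]
  have hKsym : Kᵀ = K := by rw [hC, Matrix.transpose_mul, Matrix.transpose_transpose]
  have hLL : (K * P * Rᵀ) * (K * P * Rᵀ)ᵀ = K := by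
    have h2 : (K * P * Rᵀ)ᵀ = R * (Pᵀ * K) := by
      rw [Matrix.transpose_mul, Matrix.transpose_mul, Matrix.transpose_transpose, hKsym]
    rw [h2, Matrix.mul_assoc (K * P) Rᵀ, ← Matrix.mul_assoc Rᵀ R, ← hR,
      ← Matrix.mul_assoc (K * P), hkey]
  have hPKP : Pᵀ * K * P = A := by rw [hPK, Matrix.mul_assoc, hCP]
  have hRtdet : IsUnit Rᵀ.det := by rwa [Matrix.det_transpose]
  refine ⟨r, K * P * Rᵀ, P * Rᵀ, p, le_refl _, ?_, ?_, ?_, ?_, ?_⟩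
  · rw [hLL, sub_self]; exact Matrix.PosSemidef.zero
  · rw [hLL, sub_self]; simpa using hε.le
  · have h1 : Rᵀ * (R * A) = 1 := by
      rw [← Matrix.mul_assoc, ← hR, Matrix.nonsing_inv_mul A hAunit]
    have hRA : R * A = Rᵀ⁻¹ := (Matrix.inv_eq_right_inv h1).symm
    rw [Matrix.transpose_mul, Matrix.transpose_transpose]
    calc R * Pᵀ * (K * P * Rᵀ) = R * (Pᵀ * K * P) * Rᵀ := by simp only [Matrix.mul_assoc]
      _ = R * A * Rᵀ := by rw [hPKP]
      _ = Rᵀ⁻¹ * Rᵀ := by rw [hRA]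
      _ = 1 := Matrix.nonsing_inv_mul Rᵀ hRtdet
  · rw [Matrix.mul_assoc]
  · have hsurj : Function.Surjective Rᵀ.mulVec :=
      Matrix.mulVec_surjective_iff_isUnit.mpr ((Matrix.isUnit_iff_isUnit_det Rᵀ).mpr hRtdet)
    have h1 : (P * Rᵀ).mulVecLin = P.mulVecLin ∘ₗ Rᵀ.mulVecLin := Matrix.mulVecLin_mul _ _
    have h2 : LinearMap.range Rᵀ.mulVecLin = ⊤ := LinearMap.range_eq_top.mpr hsurj
    rw [h1, LinearMap.range_comp, h2, Submodule.map_top, Matrix.range_mulVecLin]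
    have h3 : (Pᵀ : Fin r → Fin N → ℝ) = fun i => Pi.single (p i) 1 := by
      ext j i
      simp [hPdef, Pi.single_apply, eq_comm]
    change Submodule.span ℝ (Set.range (Pᵀ : Fin r → Fin N → ℝ)) = _
    rw [h3]
end

section
/- Let K ∈ ℝ^{n×n} be symmetric positive semidefinite and let L, B ∈ ℝ^{n×m} satisfy Bᵀ L = I_m and K B = L. Let V ∈ ℝ^{m×m} be orthogonal with V Λ Vᵀ = Lᵀ L for a diagonal matrix Λ, and set Q := B V. Then Qᵀ K Q = I_m and Qᵀ K² Q = Λ; that is, the transformed basis is orthonormal in the RKHS inner product (Gram matrix K) and orthogonal in the empirical L² inner product (Gram matrix K²). -/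
open Matrix

namespace Matrix

variable {k m n R : Type*} [CommSemiring R]

theorem transpose_mul_mul_mul_eq [Fintype m] [Fintype n] (M : Matrix n n R) (B : Matrix n m R)
    (V : Matrix m k R) :
    (B * V)ᵀ * M * (B * V) = Vᵀ * (Bᵀ * M * B) * V := by
  simp only [transpose_mul, Matrix.mul_assoc]

theorem transpose_mul_mul_eq_one_of_mul_eq [Fintype n] [DecidableEq m] {K : Matrix n n R}
    {L B : Matrix n m R} (hBL : Bᵀ * L = 1) (hKB : K * B = L) : Bᵀ * K * B = 1 := by
  rw [Matrix.mul_assoc, hKB, hBL]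

theorem transpose_mul_mul_self_mul_eq_of_mul_eq [Fintype n] {K : Matrix n n R} (hK : K.IsSymm)
    {L B : Matrix n m R} (hKB : K * B = L) : Bᵀ * (K * K) * B = Lᵀ * L := by
  rw [← hKB, transpose_mul, hK.eq]
  simp only [Matrix.mul_assoc]

theorem transpose_mul_mul_transpose_mul [Fintype m] [DecidableEq m] {V : Matrix m m R}
    (hV : Vᵀ * V = 1) (Lam : Matrix m m R) : Vᵀ * (V * Lam * Vᵀ) * V = Lam := by
  calc Vᵀ * (V * Lam * Vᵀ) * V = (Vᵀ * V) * Lam * (Vᵀ * V) := by simp only [Matrix.mul_assoc]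
    _ = Lam := by rw [hV, Matrix.one_mul, Matrix.mul_one]

end Matrix

theorem double_orthogonal_basis_general (n m : ℕ)
    (K : Matrix (Fin n) (Fin n) ℝ) (hK : K.PosSemidef)
    (L B : Matrix (Fin n) (Fin m) ℝ)
    (hBL : Bᵀ * L = 1) (hKB : K * B = L)
    (V Lam : Matrix (Fin m) (Fin m) ℝ)
    (hV : Vᵀ * V = 1)
    (hspec : V * Lam * Vᵀ = Lᵀ * L) :
    (B * V)ᵀ * K * (B * V) = 1 ∧ (B * V)ᵀ * (K * K) * (B * V) = Lam := by
  rw [transpose_mul_mul_mul_eq, transpose_mul_mul_mul_eq,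
    transpose_mul_mul_eq_one_of_mul_eq hBL hKB,
    transpose_mul_mul_self_mul_eq_of_mul_eq (isHermitian_iff_isSymm.mp hK.isHermitian) hKB,
    ← hspec,
    transpose_mul_mul_transpose_mul hV, Matrix.mul_one]
  exact ⟨hV, rfl⟩

/-- Double-orthogonality of the transformed basis `Q = B V`: `Qᵀ K Q = I`
(orthonormality in the RKHS inner product) and `Qᵀ K² Q = Λ` (orthogonality in
the empirical L² inner product). -/
theorem double_orthogonal_basis (n m : ℕ)
    (K : Matrix (Fin n) (Fin n) ℝ) (hK : K.PosSemidef)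
    (L B : Matrix (Fin n) (Fin m) ℝ)
    (hBL : Bᵀ * L = 1) (hKB : K * B = L)
    (V Lam : Matrix (Fin m) (Fin m) ℝ)
    (hV : Vᵀ * V = 1) (hV' : V * Vᵀ = 1)
    (hLam : Lam.IsDiag) (hspec : V * Lam * Vᵀ = Lᵀ * L) :
    (B * V)ᵀ * K * (B * V) = 1 ∧ (B * V)ᵀ * (K * K) * (B * V) = Lam :=
  double_orthogonal_basis_general n m K hK L B hBL hKB V Lam hV hspec
end

section
/- Let K_X, K_Y ∈ ℝ^{n×n} be symmetric positive semidefinite, and suppose L_X, B_X ∈ ℝ^{n×m_X} satisfy B_Xᵀ L_X = I, K_X B_X = L_X, with V_X orthogonal and V_X Λ_X V_Xᵀ = L_Xᵀ L_X for Λ_X diagonal, Q_X = B_X V_X; analogously for L_Y, B_Y, V_Y, Λ_Y, Q_Y with K_Y. Then for every F̃ ∈ ℝ^{m_Y×m_X} and λ > 0, inserting F = Q_Y F̃ Q_Xᵀ into the full objective gives the exact identity R_λ(Q_Y F̃ Q_Xᵀ) = −2·trace(L_Y V_Y F̃ V_Xᵀ L_Xᵀ) + trace(F̃ Λ_X F̃ᵀ)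 + nλ·trace(F̃ F̃ᵀ), where R_λ(F) = −2·trace(K_Y F K_X) + trace(Fᵀ K_Y F K_X (K_X + nλ I_n)). -/
open Matrix

/-!
With `Q = B V`, the biorthogonality relations give `Q_Yᵀ K_Y Q_Y = I`, `Q_Xᵀ K_X Q_X = I` and
`Q_Xᵀ K_X² Q_X = Vᵀ Lᵀ L V = Λ`. Hence `Fᵀ K_Y F = Q_X F̃ᵀ F̃ Q_Xᵀ` for `F = Q_Y F̃ Q_Xᵀ`, and cycling
the trace compresses the quadratic term to `trace(F̃ᵀ F̃ (Λ_X + nλ I))`; in the linear term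
`K_Y Q_Y = L_Y V_Y` and `Q_Xᵀ K_X = V_Xᵀ L_Xᵀ`.
-/

namespace Matrix

variable {R n p q : Type*} [CommSemiring R] [Fintype n] [Fintype p] [Fintype q]
  [DecidableEq p]

theorem transpose_mul_mul_eq_one_of_biorthogonal {K : Matrix n n R} {L B : Matrix n p R}
    {V : Matrix p p R} (hBL : Bᵀ * L = 1) (hKB : K * B = L) (hV : Vᵀ * V = 1) :
    (B * V)ᵀ * K * (B * V) = 1 := by
  calc (B * V)ᵀ * K * (B * V) = Vᵀ * (Bᵀ * (K * B)) * V := by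
        simp only [transpose_mul, Matrix.mul_assoc]
    _ = 1 := by rw [hKB, hBL, Matrix.mul_one, hV]

theorem transpose_mul_sq_mul_eq_of_spectral {K : Matrix n n R} {L B : Matrix n p R}
    {V Λ : Matrix p p R} (hK : Kᵀ = K) (hKB : K * B = L) (hV : Vᵀ * V = 1)
    (hspec : V * Λ * Vᵀ = Lᵀ * L) :
    (B * V)ᵀ * K * K * (B * V) = Λ := by
  calc (B * V)ᵀ * K * K * (B * V) = Vᵀ * ((K * B)ᵀ * (K * B)) * V := by
        simp only [transpose_mul, hK, Matrix.mul_assoc]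
    _ = (Vᵀ * V) * Λ * (Vᵀ * V) := by
        rw [hKB, ← hspec]; simp only [Matrix.mul_assoc]
    _ = Λ := by rw [hV, Matrix.one_mul, Matrix.mul_one]

theorem trace_transpose_mul_mul_mul_add_smul_one {KX KY : Matrix n n R} {QX : Matrix n p R}
    {QY : Matrix n q R} {Λ : Matrix p p R} [DecidableEq q] [DecidableEq n]
    (hY : QYᵀ * KY * QY = 1) (hX : QXᵀ * KX * QX = 1) (hX2 : QXᵀ * KX * KX * QX = Λ)
    (c : R) (F : Matrix q p R) :
    ((QY * F * QXᵀ)ᵀ * KY * (QY * F * QXᵀ) * KX * (KX + c • 1)).trace =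
      (F * Λ * Fᵀ).trace + c * (F * Fᵀ).trace := by
  have hgram : (QY * F * QXᵀ)ᵀ * KY * (QY * F * QXᵀ) = QX * (Fᵀ * F) * QXᵀ := by
    calc (QY * F * QXᵀ)ᵀ * KY * (QY * F * QXᵀ) = QX * Fᵀ * (QYᵀ * KY * QY) * F * QXᵀ := by
          simp only [transpose_mul, transpose_transpose, Matrix.mul_assoc]
      _ = QX * (Fᵀ * F) * QXᵀ := by rw [hY, Matrix.mul_one, Matrix.mul_assoc QX]
  have hcompress : QXᵀ * (KX * (KX + c • 1)) * QX = Λ + c • 1 := by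
    rw [Matrix.mul_add, Matrix.mul_smul, Matrix.mul_one, Matrix.mul_add, Matrix.add_mul,
      Matrix.mul_smul, Matrix.smul_mul]
    simp only [← Matrix.mul_assoc, hX2, hX]
  calc ((QY * F * QXᵀ)ᵀ * KY * (QY * F * QXᵀ) * KX * (KX + c • 1)).trace
      = (QX * (Fᵀ * F) * QXᵀ * (KX * (KX + c • 1))).trace := by
        rw [hgram, Matrix.mul_assoc _ KX]
    _ = (Fᵀ * F * (QXᵀ * (KX * (KX + c • 1)) * QX)).trace := by
        simp only [Matrix.mul_assoc]
        rw [trace_mul_comm QX]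
        simp only [Matrix.mul_assoc]
    _ = (Fᵀ * F * Λ).trace + c * (Fᵀ * F).trace := by
        rw [hcompress, Matrix.mul_add, trace_add, Matrix.mul_smul, Matrix.mul_one, trace_smul,
          smul_eq_mul]
    _ = (F * Λ * Fᵀ).trace + c * (F * Fᵀ).trace := by
        rw [trace_mul_cycle F, trace_mul_comm Fᵀ]

end Matrix

theorem cme_reduced_objective_identity_general (n mX mY : ℕ)
    (KX KY : Matrix (Fin n) (Fin n) ℝ) (hKX : KX.PosSemidef)
    (LX BX : Matrix (Fin n) (Fin mX) ℝ) (hBLX : BXᵀ * LX = 1) (hKBX : KX * BX = LX)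
    (VX LamX : Matrix (Fin mX) (Fin mX) ℝ) (hVX : VXᵀ * VX = 1)
    (hspecX : VX * LamX * VXᵀ = LXᵀ * LX)
    (LY BY : Matrix (Fin n) (Fin mY) ℝ) (hBLY : BYᵀ * LY = 1) (hKBY : KY * BY = LY)
    (VY : Matrix (Fin mY) (Fin mY) ℝ) (hVY : VYᵀ * VY = 1)
    (lam : ℝ) :
    ∀ Ft : Matrix (Fin mY) (Fin mX) ℝ,
      -2 * (KY * ((BY * VY) * Ft * (BX * VX)ᵀ) * KX).trace +
        (((BY * VY) * Ft * (BX * VX)ᵀ)ᵀ * KY * ((BY * VY) * Ft * (BX * VX)ᵀ) * KX *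
          (KX + ((n : ℝ) * lam) • 1)).trace =
      -2 * (LY * VY * Ft * VXᵀ * LXᵀ).trace + (Ft * LamX * Ftᵀ).trace +
        (n : ℝ) * lam * (Ft * Ftᵀ).trace := by
  intro Ft
  have hKXsymm : KXᵀ = KX := hKX.1
  have hlinear : KY * ((BY * VY) * Ft * (BX * VX)ᵀ) * KX = LY * VY * Ft * VXᵀ * LXᵀ := by
    simp only [← hKBX, ← hKBY, transpose_mul, hKXsymm, Matrix.mul_assoc]
  rw [hlinear, trace_transpose_mul_mul_mul_add_smul_one
    (transpose_mul_mul_eq_one_of_biorthogonal hBLY hKBY hVY)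
    (transpose_mul_mul_eq_one_of_biorthogonal hBLX hKBX hVX)
    (transpose_mul_sq_mul_eq_of_spectral hKXsymm hKBX hVX hspecX)]
  ring

/-- Inserting the low-rank ansatz `F = Q_Y F̃ Q_Xᵀ` into the full CME objective
yields the exact reduced form
`R_λ(Q_Y F̃ Q_Xᵀ) = −2 trace(L_Y V_Y F̃ V_Xᵀ L_Xᵀ) + trace(F̃ Λ_X F̃ᵀ) + nλ trace(F̃ F̃ᵀ)`. -/
theorem cme_reduced_objective_identity (n mX mY : ℕ)
    (KX KY : Matrix (Fin n) (Fin n) ℝ) (hKX : KX.PosSemidef) (hKY : KY.PosSemidef)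
    (LX BX : Matrix (Fin n) (Fin mX) ℝ) (hBLX : BXᵀ * LX = 1) (hKBX : KX * BX = LX)
    (VX LamX : Matrix (Fin mX) (Fin mX) ℝ) (hVX : VXᵀ * VX = 1) (hVX' : VX * VXᵀ = 1)
    (hLamX : LamX.IsDiag) (hspecX : VX * LamX * VXᵀ = LXᵀ * LX)
    (LY BY : Matrix (Fin n) (Fin mY) ℝ) (hBLY : BYᵀ * LY = 1) (hKBY : KY * BY = LY)
    (VY LamY : Matrix (Fin mY) (Fin mY) ℝ) (hVY : VYᵀ * VY = 1) (hVY' : VY * VYᵀ = 1)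
    (hLamY : LamY.IsDiag) (hspecY : VY * LamY * VYᵀ = LYᵀ * LY)
    (lam : ℝ) (hlam : 0 < lam) :
    ∀ Ft : Matrix (Fin mY) (Fin mX) ℝ,
      -2 * (KY * ((BY * VY) * Ft * (BX * VX)ᵀ) * KX).trace +
        (((BY * VY) * Ft * (BX * VX)ᵀ)ᵀ * KY * ((BY * VY) * Ft * (BX * VX)ᵀ) * KX *
          (KX + ((n : ℝ) * lam) • 1)).trace =
      -2 * (LY * VY * Ft * VXᵀ * LXᵀ).trace + (Ft * LamX * Ftᵀ).trace +
        (n : ℝ) * lam * (Ft * Ftᵀ).trace :=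
  cme_reduced_objective_identity_general n mX mY KX KY hKX LX BX hBLX hKBX VX LamX hVX hspecX LY BY
    hBLY hKBY VY hVY lam
end

section
/- Let K_X, K_Y ∈ ℝ^{n×n} be symmetric positive semidefinite, and suppose L_X, B_X ∈ ℝ^{n×m_X} satisfy B_Xᵀ L_X = I, K_X B_X = L_X, with V_X orthogonal, V_X Λ_X V_Xᵀ = L_Xᵀ L_X, Q_X = B_X V_X; analogously for Y. For F ∈ ℝ^{n×n}, the matrix F_ℋ̃ := (L_Y V_Y)ᵀ F (L_X V_X) is a global minimizer over F' ∈ ℝ^{m_Y×m_X} of the squared RKHS distance G(F') := trace((F − Q_Y F' Q_Xᵀ)ᵀ K_Y (F − Q_Y F' Q_Xᵀ) K_X); that is, F_ℋ̃ gives the orthogonal projection of the full-rank CME estimator onto the low-rank subspace. -/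
open Matrix

/-- `F_ℋ̃ = (L_Y V_Y)ᵀ F (L_X V_X)` globally minimizes the squared RKHS distance
`G(F') = trace((F − Q_Y F' Q_Xᵀ)ᵀ K_Y (F − Q_Y F' Q_Xᵀ) K_X)`, i.e. it gives the
orthogonal projection of the full-rank CME estimator onto the low-rank subspace. -/
theorem projection_minimizer (n mX mY : ℕ)
    (KX KY : Matrix (Fin n) (Fin n) ℝ) (hKX : KX.PosSemidef) (hKY : KY.PosSemidef)
    (LX BX : Matrix (Fin n) (Fin mX) ℝ) (hBLX : BXᵀ * LX = 1) (hKBX : KX * BX = LX)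
    (VX LamX : Matrix (Fin mX) (Fin mX) ℝ) (hVX : VXᵀ * VX = 1) (hVX' : VX * VXᵀ = 1)
    (hLamX : LamX.IsDiag) (hspecX : VX * LamX * VXᵀ = LXᵀ * LX)
    (LY BY : Matrix (Fin n) (Fin mY) ℝ) (hBLY : BYᵀ * LY = 1) (hKBY : KY * BY = LY)
    (VY LamY : Matrix (Fin mY) (Fin mY) ℝ) (hVY : VYᵀ * VY = 1) (hVY' : VY * VYᵀ = 1)
    (hLamY : LamY.IsDiag) (hspecY : VY * LamY * VYᵀ = LYᵀ * LY)
    (F : Matrix (Fin n) (Fin n) ℝ) :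
    ∀ F' : Matrix (Fin mY) (Fin mX) ℝ,
      ((F - (BY * VY) * ((LY * VY)ᵀ * F * (LX * VX)) * (BX * VX)ᵀ)ᵀ * KY *
        (F - (BY * VY) * ((LY * VY)ᵀ * F * (LX * VX)) * (BX * VX)ᵀ) * KX).trace ≤
      ((F - (BY * VY) * F' * (BX * VX)ᵀ)ᵀ * KY *
        (F - (BY * VY) * F' * (BX * VX)ᵀ) * KX).trace := by
  intro F'
  have hKXs : KXᵀ = KX := by simpa [Matrix.IsHermitian, Matrix.conjTranspose_eq_transpose_of_trivial] using hKX.1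
  have hKYs : KYᵀ = KY := by simpa [Matrix.IsHermitian, Matrix.conjTranspose_eq_transpose_of_trivial] using hKY.1
  set F0 : Matrix (Fin mY) (Fin mX) ℝ := (LY * VY)ᵀ * F * (LX * VX) with hF0
  set R : Matrix (Fin n) (Fin n) ℝ := F - (BY * VY) * F0 * (BX * VX)ᵀ with hR
  set D : Matrix (Fin mY) (Fin mX) ℝ := F0 - F' with hD
  set S : Matrix (Fin n) (Fin n) ℝ := (BY * VY) * D * (BX * VX)ᵀ with hS
  -- basic identities
  have hLB_X : LXᵀ * BX = 1 := by
    have := congrArg Matrix.transpose hBLX; simpa using this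
  have hLB_Y : LYᵀ * BY = 1 := by
    have := congrArg Matrix.transpose hBLY; simpa using this
  have hKQY : KY * (BY * VY) = LY * VY := by
    rw [← Matrix.mul_assoc, hKBY]
  have hKQX : KX * (BX * VX) = LX * VX := by
    rw [← Matrix.mul_assoc, hKBX]
  have hQKX : (BX * VX)ᵀ * KX = (LX * VX)ᵀ := by
    have := congrArg Matrix.transpose hKQX
    rw [transpose_mul, hKXs] at this
    exact this
  have hQKY : (BY * VY)ᵀ * KY = (LY * VY)ᵀ := by
    have := congrArg Matrix.transpose hKQY
    rw [transpose_mul, hKYs] at this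
    exact this
  have hLQY : (LY * VY)ᵀ * (BY * VY) = 1 := by
    rw [transpose_mul]
    calc VYᵀ * LYᵀ * (BY * VY) = VYᵀ * (LYᵀ * BY) * VY := by
          simp [Matrix.mul_assoc]
      _ = 1 := by rw [hLB_Y, Matrix.mul_one, hVY]
  have hQLX : (BX * VX)ᵀ * (LX * VX) = 1 := by
    rw [transpose_mul]
    calc VXᵀ * BXᵀ * (LX * VX) = VXᵀ * (BXᵀ * LX) * VX := by
          simp [Matrix.mul_assoc]
      _ = 1 := by rw [hBLX, Matrix.mul_one, hVX]
  have hLQX : (LX * VX)ᵀ * (BX * VX) = 1 := by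
    rw [transpose_mul]
    calc VXᵀ * LXᵀ * (BX * VX) = VXᵀ * (LXᵀ * BX) * VX := by
          simp [Matrix.mul_assoc]
      _ = 1 := by rw [hLB_X, Matrix.mul_one, hVX]
  have hQLY : (BY * VY)ᵀ * (LY * VY) = 1 := by
    rw [transpose_mul]
    calc VYᵀ * BYᵀ * (LY * VY) = VYᵀ * (BYᵀ * LY) * VY := by
          simp [Matrix.mul_assoc]
      _ = 1 := by rw [hBLY, Matrix.mul_one, hVY]
  -- projection residual identity
  have hproj : (LY * VY)ᵀ * R * (LX * VX) = 0 := by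
    rw [hR, Matrix.mul_sub, Matrix.sub_mul]
    have : (LY * VY)ᵀ * ((BY * VY) * F0 * (BX * VX)ᵀ) * (LX * VX) = F0 := by
      calc (LY * VY)ᵀ * ((BY * VY) * F0 * (BX * VX)ᵀ) * (LX * VX)
          = ((LY * VY)ᵀ * (BY * VY)) * F0 * ((BX * VX)ᵀ * (LX * VX)) := by
            simp [Matrix.mul_assoc]
        _ = F0 := by rw [hLQY, hQLX, Matrix.one_mul, Matrix.mul_one]
    rw [this, ← hF0, sub_self]
  have hsplit : F - (BY * VY) * F' * (BX * VX)ᵀ = R + S := by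
    rw [hR, hS, hD, Matrix.mul_sub, Matrix.sub_mul]
    abel
  -- cross terms vanish
  have hcross1 : (Rᵀ * KY * S * KX).trace = 0 := by
    have h1 : Rᵀ * KY * S * KX = Rᵀ * (LY * VY) * D * (LX * VX)ᵀ := by
      calc Rᵀ * KY * S * KX
          = Rᵀ * (KY * (BY * VY)) * D * ((BX * VX)ᵀ * KX) := by
            rw [hS]; simp [Matrix.mul_assoc]
        _ = Rᵀ * (LY * VY) * D * (LX * VX)ᵀ := by rw [hKQY, hQKX]
    rw [h1]
    have h2 : (Rᵀ * (LY * VY) * D * (LX * VX)ᵀ).trace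
        = (((LY * VY)ᵀ * R * (LX * VX))ᵀ * D).trace := by
      rw [Matrix.trace_mul_comm]
      congr 1
      simp [Matrix.mul_assoc, transpose_mul]
    rw [h2, hproj]
    simp
  have hcross2 : (Sᵀ * KY * R * KX).trace = 0 := by
    have h1 : Sᵀ * KY * R * KX = (KXᵀ * Rᵀ * KYᵀ * S)ᵀ := by
      simp [transpose_mul, Matrix.mul_assoc]
    rw [h1, Matrix.trace_transpose, hKXs, hKYs]
    calc (KX * Rᵀ * KY * S).trace = (KX * (Rᵀ * KY * S)).trace := by
          simp [Matrix.mul_assoc]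
      _ = ((Rᵀ * KY * S) * KX).trace := Matrix.trace_mul_comm _ _
      _ = 0 := hcross1
  -- quadratic term
  have hSt : Sᵀ = (BX * VX) * Dᵀ * (BY * VY)ᵀ := by
    rw [hS]; simp [transpose_mul, Matrix.mul_assoc]
  have hKSK : KY * S * KX = (LY * VY) * D * (LX * VX)ᵀ := by
    rw [hS]
    calc KY * ((BY * VY) * D * (BX * VX)ᵀ) * KX
        = (KY * (BY * VY)) * D * ((BX * VX)ᵀ * KX) := by simp [Matrix.mul_assoc]
      _ = (LY * VY) * D * (LX * VX)ᵀ := by rw [hKQY, hQKX]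
  have hquad : (Sᵀ * KY * S * KX).trace = (Dᵀ * D).trace := by
    have h1 : Sᵀ * KY * S * KX = (BX * VX) * (Dᵀ * D) * (LX * VX)ᵀ := by
      calc Sᵀ * KY * S * KX = Sᵀ * (KY * S * KX) := by simp [Matrix.mul_assoc]
        _ = (BX * VX) * Dᵀ * ((BY * VY)ᵀ * (LY * VY)) * D * (LX * VX)ᵀ := by
            rw [hKSK, hSt]; simp [Matrix.mul_assoc]
        _ = (BX * VX) * (Dᵀ * D) * (LX * VX)ᵀ := by
            rw [hQLY, Matrix.mul_one]; simp [Matrix.mul_assoc]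
    rw [h1, Matrix.trace_mul_comm, ← Matrix.mul_assoc, hLQX, Matrix.one_mul]
  have hDnn : 0 ≤ (Dᵀ * D).trace := by
    have : (Dᵀ * D).trace = ∑ i, ∑ j, D j i * D j i := by
      simp [Matrix.trace, Matrix.mul_apply, Matrix.diag]
    rw [this]
    refine Finset.sum_nonneg fun i _ => Finset.sum_nonneg fun j _ => mul_self_nonneg _
  rw [hsplit]
  have hexp : ((R + S)ᵀ * KY * (R + S) * KX).trace
      = (Rᵀ * KY * R * KX).trace + (Rᵀ * KY * S * KX).trace
        + (Sᵀ * KY * R * KX).trace + (Sᵀ * KY * S * KX).trace := by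
    simp only [transpose_add, Matrix.add_mul, Matrix.mul_add, Matrix.trace_add]
    ring
  rw [hexp, hcross1, hcross2, hquad]
  linarith
end

section
/- Under the structure of the pivoted Cholesky factorizations (B_Xᵀ L_X = I, K_X B_X = L_X, V_X orthogonal with V_X Λ_X V_Xᵀ = L_Xᵀ L_X, Q_X = B_X V_X, and analogously for Y, with K_X, K_Y symmetric positive semidefinite), for every F ∈ ℝ^{n×n} and every G ∈ ℝ^{m_Y×m_X} the Pythagorean identity holds: trace((F − Q_Y G Q_Xᵀ)ᵀ K_Y (F − Q_Y G Q_Xᵀ) K_X) = trace((F − Q_Y F_ℋ̃ Q_Xᵀ)ᵀ K_Y (F − Q_Y F_ℋ̃ Q_Xᵀ) K_X) + ‖F_ℋ̃ − G‖_F², where F_ℋ̃ = (L_Y V_Y)ᵀ F (L_X V_X) and ‖·‖_F is the Frobenius norm. -/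
open Matrix

/-- Pythagorean identity for the RKHS projection: for every `F ∈ ℝ^{n×n}` and
`G ∈ ℝ^{m_Y×m_X}`,
`‖F − Q_Y G Q_Xᵀ‖²_ℋ = ‖F − Q_Y F_ℋ̃ Q_Xᵀ‖²_ℋ + ‖F_ℋ̃ − G‖_F²`,
where `F_ℋ̃ = (L_Y V_Y)ᵀ F (L_X V_X)`, the squared RKHS norm of the element with
coefficient matrix `A` being `trace(Aᵀ K_Y A K_X)` and `‖A‖_F² = trace(Aᵀ A)`. -/
theorem pythagorean_identity (n mX mY : ℕ)
    (KX KY : Matrix (Fin n) (Fin n) ℝ) (hKX : KX.PosSemidef) (hKY : KY.PosSemidef)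
    (LX BX : Matrix (Fin n) (Fin mX) ℝ) (hBLX : BXᵀ * LX = 1) (hKBX : KX * BX = LX)
    (VX LamX : Matrix (Fin mX) (Fin mX) ℝ) (hVX : VXᵀ * VX = 1) (hVX' : VX * VXᵀ = 1)
    (hLamX : LamX.IsDiag) (hspecX : VX * LamX * VXᵀ = LXᵀ * LX)
    (LY BY : Matrix (Fin n) (Fin mY) ℝ) (hBLY : BYᵀ * LY = 1) (hKBY : KY * BY = LY)
    (VY LamY : Matrix (Fin mY) (Fin mY) ℝ) (hVY : VYᵀ * VY = 1) (hVY' : VY * VYᵀ = 1)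
    (hLamY : LamY.IsDiag) (hspecY : VY * LamY * VYᵀ = LYᵀ * LY) :
    ∀ (F : Matrix (Fin n) (Fin n) ℝ) (G : Matrix (Fin mY) (Fin mX) ℝ),
      ((F - (BY * VY) * G * (BX * VX)ᵀ)ᵀ * KY *
        (F - (BY * VY) * G * (BX * VX)ᵀ) * KX).trace =
      ((F - (BY * VY) * ((LY * VY)ᵀ * F * (LX * VX)) * (BX * VX)ᵀ)ᵀ * KY *
        (F - (BY * VY) * ((LY * VY)ᵀ * F * (LX * VX)) * (BX * VX)ᵀ) * KX).trace +
      (((LY * VY)ᵀ * F * (LX * VX) - G)ᵀ * ((LY * VY)ᵀ * F * (LX * VX) - G)).trace := by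
  intro F G
  have hKXs : KXᵀ = KX := by
    simpa [Matrix.IsHermitian, Matrix.conjTranspose_eq_transpose_of_trivial] using hKX.1
  have hKYs : KYᵀ = KY := by
    simpa [Matrix.IsHermitian, Matrix.conjTranspose_eq_transpose_of_trivial] using hKY.1
  set QX : Matrix (Fin n) (Fin mX) ℝ := BX * VX with hQXdef
  set QY : Matrix (Fin n) (Fin mY) ℝ := BY * VY with hQYdef
  set PX : Matrix (Fin n) (Fin mX) ℝ := LX * VX with hPXdef
  set PY : Matrix (Fin n) (Fin mY) ℝ := LY * VY with hPYdef
  set Ft : Matrix (Fin mY) (Fin mX) ℝ := PYᵀ * F * PX with hFtdef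
  have hKQX : KX * QX = PX := by rw [hQXdef, hPXdef, ← Matrix.mul_assoc, hKBX]
  have hKQY : KY * QY = PY := by rw [hQYdef, hPYdef, ← Matrix.mul_assoc, hKBY]
  have hQKX : QXᵀ * KX = PXᵀ := by rw [← hKXs, ← transpose_mul, hKQX]
  have hQKY : QYᵀ * KY = PYᵀ := by rw [← hKYs, ← transpose_mul, hKQY]
  have hQPX : QXᵀ * PX = 1 := by
    rw [hQXdef, hPXdef, transpose_mul, Matrix.mul_assoc, ← Matrix.mul_assoc BXᵀ,
      hBLX, Matrix.one_mul, hVX]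
  have hQPY : QYᵀ * PY = 1 := by
    rw [hQYdef, hPYdef, transpose_mul, Matrix.mul_assoc, ← Matrix.mul_assoc BYᵀ,
      hBLY, Matrix.one_mul, hVY]
  have hPQX : PXᵀ * QX = 1 := by
    have := congrArg transpose hQPX
    simpa [transpose_mul] using this
  have hPQY : PYᵀ * QY = 1 := by
    have := congrArg transpose hQPY
    simpa [transpose_mul] using this
  have key : ∀ G' : Matrix (Fin mY) (Fin mX) ℝ,
      ((F - QY * G' * QXᵀ)ᵀ * KY * (F - QY * G' * QXᵀ) * KX).trace =
      (Fᵀ * KY * F * KX).trace - (Ftᵀ * G').trace - (G'ᵀ * Ft).trace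
        + (G'ᵀ * G').trace := by
    intro G'
    have tB : (Fᵀ * KY * (QY * G' * QXᵀ) * KX).trace = (Ftᵀ * G').trace := by
      have e1 : Fᵀ * KY * (QY * G' * QXᵀ) * KX = Fᵀ * (KY * QY) * G' * (QXᵀ * KX) := by
        simp only [Matrix.mul_assoc]
      rw [e1, hKQY, hQKX, Matrix.trace_mul_comm]
      have e2 : Ftᵀ = PXᵀ * (Fᵀ * PY) := by
        rw [hFtdef]
        simp only [transpose_mul, transpose_transpose, Matrix.mul_assoc]
      rw [e2]
      simp only [Matrix.mul_assoc]
    have tA : ((QY * G' * QXᵀ)ᵀ * KY * F * KX).trace = (G'ᵀ * Ft).trace := by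
      have e1 : (QY * G' * QXᵀ)ᵀ * KY * F * KX = QX * (G'ᵀ * (QYᵀ * KY) * F * KX) := by
        simp only [transpose_mul, transpose_transpose, Matrix.mul_assoc]
      rw [e1, Matrix.trace_mul_comm, hQKY]
      have e2 : G'ᵀ * PYᵀ * F * KX * QX = G'ᵀ * (PYᵀ * F * (KX * QX)) := by
        simp only [Matrix.mul_assoc]
      rw [e2, hKQX, hFtdef]
    have tC : ((QY * G' * QXᵀ)ᵀ * KY * (QY * G' * QXᵀ) * KX).trace = (G'ᵀ * G').trace := by
      have e1 : (QY * G' * QXᵀ)ᵀ * KY * (QY * G' * QXᵀ) * KX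
          = QX * (G'ᵀ * (QYᵀ * KY * QY) * G' * (QXᵀ * KX)) := by
        simp only [transpose_mul, transpose_transpose, Matrix.mul_assoc]
      rw [e1, Matrix.trace_mul_comm, hQKY, hQKX, hPQY]
      have e2 : G'ᵀ * (1 : Matrix (Fin mY) (Fin mY) ℝ) * G' * PXᵀ * QX
          = G'ᵀ * G' * (PXᵀ * QX) := by
        simp only [Matrix.mul_one, Matrix.mul_assoc]
      rw [e2, hPQX, Matrix.mul_one]
    calc ((F - QY * G' * QXᵀ)ᵀ * KY * (F - QY * G' * QXᵀ) * KX).trace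
        = (Fᵀ * KY * F * KX).trace - (Fᵀ * KY * (QY * G' * QXᵀ) * KX).trace
          - ((QY * G' * QXᵀ)ᵀ * KY * F * KX).trace
          + ((QY * G' * QXᵀ)ᵀ * KY * (QY * G' * QXᵀ) * KX).trace := by
          simp only [transpose_sub, Matrix.sub_mul, Matrix.mul_sub, trace_sub]
          ring
      _ = _ := by rw [tA, tB, tC]
  have hGF : (Gᵀ * Ft).trace = (Ftᵀ * G).trace := by
    rw [← Matrix.trace_transpose (Gᵀ * Ft), transpose_mul, transpose_transpose]
  have frob : ((Ft - G)ᵀ * (Ft - G)).trace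
      = (Ftᵀ * Ft).trace - (Ftᵀ * G).trace - (Gᵀ * Ft).trace + (Gᵀ * G).trace := by
    simp only [transpose_sub, Matrix.sub_mul, Matrix.mul_sub, trace_sub]
    ring
  rw [key G, key Ft, frob, hGF]
  ring
end

section
/- Under the structure of the pivoted Cholesky factorizations (B_Xᵀ L_X = I, K_X B_X = L_X, V_X orthogonal with V_X Λ_X V_Xᵀ = L_Xᵀ L_X, Q_X = B_X V_X, and analogously for Y, with K_X, K_Y symmetric positive semidefinite), for every F ∈ ℝ^{n×n} the squared RKHS distance of F to its projection satisfies the exact identity trace((F − Q_Y F_ℋ̃ Q_Xᵀ)ᵀ K_Y (F − Q_Y F_ℋ̃ Q_Xᵀ) K_X) = trace(Fᵀ K_Y F K_X) − trace(Fᵀ L_Y L_Yᵀ F L_X L_Xᵀ), where F_ℋ̃ = (L_Y V_Y)ᵀ F (L_X V_X). -/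
open Matrix

/-- Exact identity for the squared RKHS distance of `F` to its projection:
`‖F − Q_Y F_ℋ̃ Q_Xᵀ‖²_ℋ = trace(Fᵀ K_Y F K_X) − trace(Fᵀ L_Y L_Yᵀ F L_X L_Xᵀ)`,
where `F_ℋ̃ = (L_Y V_Y)ᵀ F (L_X V_X)`. -/
theorem projection_residual_identity (n mX mY : ℕ)
    (KX KY : Matrix (Fin n) (Fin n) ℝ) (hKX : KX.PosSemidef) (hKY : KY.PosSemidef)
    (LX BX : Matrix (Fin n) (Fin mX) ℝ) (hBLX : BXᵀ * LX = 1) (hKBX : KX * BX = LX)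
    (VX LamX : Matrix (Fin mX) (Fin mX) ℝ) (hVX : VXᵀ * VX = 1) (hVX' : VX * VXᵀ = 1)
    (hLamX : LamX.IsDiag) (hspecX : VX * LamX * VXᵀ = LXᵀ * LX)
    (LY BY : Matrix (Fin n) (Fin mY) ℝ) (hBLY : BYᵀ * LY = 1) (hKBY : KY * BY = LY)
    (VY LamY : Matrix (Fin mY) (Fin mY) ℝ) (hVY : VYᵀ * VY = 1) (hVY' : VY * VYᵀ = 1)
    (hLamY : LamY.IsDiag) (hspecY : VY * LamY * VYᵀ = LYᵀ * LY) :
    ∀ F : Matrix (Fin n) (Fin n) ℝ,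
      ((F - (BY * VY) * ((LY * VY)ᵀ * F * (LX * VX)) * (BX * VX)ᵀ)ᵀ * KY *
        (F - (BY * VY) * ((LY * VY)ᵀ * F * (LX * VX)) * (BX * VX)ᵀ) * KX).trace =
      (Fᵀ * KY * F * KX).trace - (Fᵀ * (LY * LYᵀ) * F * (LX * LXᵀ)).trace := by
  intro F
  have hKXs : KXᵀ = KX := by simpa [Matrix.IsSymm] using hKX.1
  have hKYs : KYᵀ = KY := by simpa [Matrix.IsSymm] using hKY.1
  -- basic identities
  have eBK_X : BXᵀ * KX = LXᵀ := by
    have := congrArg Matrix.transpose hKBX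
    simpa [Matrix.transpose_mul, hKXs] using this
  have eBK_Y : BYᵀ * KY = LYᵀ := by
    have := congrArg Matrix.transpose hKBY
    simpa [Matrix.transpose_mul, hKYs] using this
  have eLB_X : LXᵀ * BX = 1 := by
    have := congrArg Matrix.transpose hBLX
    simpa [Matrix.transpose_mul] using this
  have eLB_Y : LYᵀ * BY = 1 := by
    have := congrArg Matrix.transpose hBLY
    simpa [Matrix.transpose_mul] using this
  -- applied (right-associated) forms for simp
  have eKB_X' : ∀ {p : ℕ} (M : Matrix (Fin mX) (Fin p) ℝ),
      KX * (BX * M) = LX * M := fun M => by rw [← Matrix.mul_assoc, hKBX]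
  have eKB_Y' : ∀ {p : ℕ} (M : Matrix (Fin mY) (Fin p) ℝ),
      KY * (BY * M) = LY * M := fun M => by rw [← Matrix.mul_assoc, hKBY]
  have eBK_X' : ∀ {p : ℕ} (M : Matrix (Fin n) (Fin p) ℝ),
      BXᵀ * (KX * M) = LXᵀ * M := fun M => by rw [← Matrix.mul_assoc, eBK_X]
  have eBK_Y' : ∀ {p : ℕ} (M : Matrix (Fin n) (Fin p) ℝ),
      BYᵀ * (KY * M) = LYᵀ * M := fun M => by rw [← Matrix.mul_assoc, eBK_Y]
  have eLB_X' : ∀ {p : ℕ} (M : Matrix (Fin mX) (Fin p) ℝ),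
      LXᵀ * (BX * M) = M := fun M => by rw [← Matrix.mul_assoc, eLB_X, Matrix.one_mul]
  have eLB_Y' : ∀ {p : ℕ} (M : Matrix (Fin mY) (Fin p) ℝ),
      LYᵀ * (BY * M) = M := fun M => by rw [← Matrix.mul_assoc, eLB_Y, Matrix.one_mul]
  have eVV_X' : ∀ {p : ℕ} (M : Matrix (Fin mX) (Fin p) ℝ),
      VX * (VXᵀ * M) = M := fun M => by rw [← Matrix.mul_assoc, hVX', Matrix.one_mul]
  have eVV_Y' : ∀ {p : ℕ} (M : Matrix (Fin mY) (Fin p) ℝ),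
      VY * (VYᵀ * M) = M := fun M => by rw [← Matrix.mul_assoc, hVY', Matrix.one_mul]
  have eVtV_X' : ∀ {p : ℕ} (M : Matrix (Fin mX) (Fin p) ℝ),
      VXᵀ * (VX * M) = M := fun M => by rw [← Matrix.mul_assoc, hVX, Matrix.one_mul]
  have eVtV_Y' : ∀ {p : ℕ} (M : Matrix (Fin mY) (Fin p) ℝ),
      VYᵀ * (VY * M) = M := fun M => by rw [← Matrix.mul_assoc, hVY, Matrix.one_mul]
  set M : Matrix (Fin n) (Fin n) ℝ :=
    (BY * VY) * ((LY * VY)ᵀ * F * (LX * VX)) * (BX * VX)ᵀ with hM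
  have expand : (F - M)ᵀ * KY * (F - M) * KX =
      Fᵀ * KY * F * KX - Fᵀ * KY * M * KX - Mᵀ * KY * F * KX + Mᵀ * KY * M * KX := by
    simp only [Matrix.transpose_sub]
    noncomm_ring
  have hT2 : Fᵀ * KY * M * KX = Fᵀ * (LY * LYᵀ) * F * (LX * LXᵀ) := by
    simp only [hM, Matrix.transpose_mul, Matrix.mul_assoc, eKB_Y', eVV_Y', eVV_X',
      eVtV_X', eVtV_Y', eBK_X', eBK_Y', eLB_X', eLB_Y', eBK_X, eBK_Y, hVX', hVY']
  have hT3 : (Mᵀ * KY * F * KX).trace = (Fᵀ * (LY * LYᵀ) * F * (LX * LXᵀ)).trace := by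
    have h1 : Mᵀ * KY * F * KX =
        BX * (LXᵀ * (Fᵀ * (LY * (LYᵀ * (F * KX))))) := by
      simp only [hM, Matrix.transpose_mul, Matrix.transpose_transpose, Matrix.mul_assoc,
        eKB_Y', eVV_Y', eVV_X', eVtV_X', eVtV_Y', eBK_X', eBK_Y', eLB_X', eLB_Y',
        eBK_X, eBK_Y, hVX', hVY']
    rw [h1, Matrix.trace_mul_comm]
    have h2 : LXᵀ * (Fᵀ * (LY * (LYᵀ * (F * KX)))) * BX =
        LXᵀ * (Fᵀ * (LY * (LYᵀ * (F * LX)))) := by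
      simp only [Matrix.mul_assoc, eKB_X', hKBX]
    rw [h2, Matrix.trace_mul_comm]
    simp only [Matrix.mul_assoc]
  have hT4 : (Mᵀ * KY * M * KX).trace = (Fᵀ * (LY * LYᵀ) * F * (LX * LXᵀ)).trace := by
    have h1 : Mᵀ * KY * M * KX =
        BX * (LXᵀ * (Fᵀ * (LY * (LYᵀ * (F * (LX * LXᵀ)))))) := by
      simp only [hM, Matrix.transpose_mul, Matrix.transpose_transpose, Matrix.mul_assoc,
        eKB_Y', eVV_Y', eVV_X', eVtV_X', eVtV_Y', eBK_X', eBK_Y', eLB_X', eLB_Y',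
        eBK_X, eBK_Y, hVX', hVY']
    rw [h1, Matrix.trace_mul_comm]
    have h2 : LXᵀ * (Fᵀ * (LY * (LYᵀ * (F * (LX * LXᵀ))))) * BX =
        LXᵀ * (Fᵀ * (LY * (LYᵀ * (F * LX)))) := by
      simp only [Matrix.mul_assoc, eLB_X, Matrix.mul_one]
    rw [h2, Matrix.trace_mul_comm]
    simp only [Matrix.mul_assoc]
  rw [expand]
  simp only [Matrix.trace_add, Matrix.trace_sub, hT2, hT3, hT4]
  ring
end

section
/- Let K_X, K_Y ∈ ℝ^{n×n} be symmetric positive semidefinite, L_X ∈ ℝ^{n×m_X}, L_Y ∈ ℝ^{n×m_Y}, and suppose K_X − L_X L_Xᵀ and K_Y − L_Y L_Yᵀ are positive semidefinite with trace(K_X − L_X L_Xᵀ) ≤ ε and trace(K_Y − L_Y L_Yᵀ) ≤ ε. Then for every F ∈ ℝ^{n×n}, trace(Fᵀ K_Y F K_X) − trace(Fᵀ L_Y L_Yᵀ F L_X L_Xᵀ) ≤ ε · ‖F‖_F² · (trace(K_X) + trace(K_Y)), where ‖·‖_F denotes the Frobenius norm. -/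
open Matrix

lemma psd_trace_nonneg {n : ℕ} {M : Matrix (Fin n) (Fin n) ℝ} (hM : M.PosSemidef) :
    0 ≤ M.trace := by
  have h : ∀ i, 0 ≤ M i i := fun i => hM.diag_nonneg
  exact Finset.sum_nonneg fun i _ => h i

lemma psd_trace_mul_nonneg {n : ℕ} {A B : Matrix (Fin n) (Fin n) ℝ}
    (hA : A.PosSemidef) (hB : B.PosSemidef) : 0 ≤ (A * B).trace := by
  open scoped MatrixOrder in
  obtain ⟨s, hsa, -, hss⟩ := CFC.exists_sqrt_of_isSelfAdjoint_of_quasispectrumRestricts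
    hB.isHermitian (QuasispectrumRestricts.nnreal_of_nonneg hB.nonneg)
  have hpsd : (s * A * sᴴ).PosSemidef := hA.mul_mul_conjTranspose_same s
  rw [(show s.IsHermitian from hsa).eq] at hpsd
  have : (A * B).trace = (s * A * s).trace := by
    rw [← hss, ← mul_assoc, trace_mul_comm (A * s) s, ← mul_assoc]
  rw [this]
  exact psd_trace_nonneg hpsd

lemma psd_smul_one_sub {n : ℕ} {A : Matrix (Fin n) (Fin n) ℝ} (hA : A.PosSemidef) :
    (A.trace • (1 : Matrix (Fin n) (Fin n) ℝ) - A).PosSemidef := by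
  open scoped MatrixOrder in
  obtain ⟨s, hsa, -, hss⟩ := CFC.exists_sqrt_of_isSelfAdjoint_of_quasispectrumRestricts
    hA.isHermitian (QuasispectrumRestricts.nnreal_of_nonneg hA.nonneg)
  have hsym : ∀ i j, s j i = s i j := fun i j =>
    congrFun (congrFun (show s.IsHermitian from hsa).eq i) j
  have hst : sᵀ = s := by
    rw [← conjTranspose_eq_transpose_of_trivial]
    exact (show s.IsHermitian from hsa).eq
  refine PosSemidef.of_dotProduct_mulVec_nonneg ?_ ?_
  · have : (A.trace • (1 : Matrix (Fin n) (Fin n) ℝ) - A)ᴴ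
        = A.trace • (1 : Matrix (Fin n) (Fin n) ℝ) - A := by
      rw [conjTranspose_sub, conjTranspose_smul, conjTranspose_one, hA.isHermitian.eq,
        star_trivial]
    exact this
  · intro x
    have key : star x ⬝ᵥ (A *ᵥ x) ≤ A.trace * (x ⬝ᵥ x) := by
      have hAx : star x ⬝ᵥ (A *ᵥ x) = ∑ i, (∑ j, s i j * x j) ^ 2 := by
        rw [← hss, ← mulVec_mulVec, star_trivial, dotProduct_mulVec, ← mulVec_transpose, hst]
        simp [dotProduct, mulVec, sq]
      have htr : A.trace = ∑ i, ∑ j, s i j ^ 2 := by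
        rw [← hss]
        simp only [trace, diag, mul_apply]
        congr 1; ext i
        congr 1; ext j
        rw [hsym i j, sq]
      have hxx : x ⬝ᵥ x = ∑ j, x j ^ 2 := by
        simp [dotProduct, sq]
      rw [hAx, htr, hxx, Finset.sum_mul]
      refine Finset.sum_le_sum fun i _ => ?_
      exact Finset.sum_mul_sq_le_sq_mul_sq Finset.univ (fun j => s i j) x
    have : star x ⬝ᵥ ((A.trace • (1 : Matrix (Fin n) (Fin n) ℝ) - A) *ᵥ x)
        = A.trace * (x ⬝ᵥ x) - star x ⬝ᵥ (A *ᵥ x) := by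
      simp [sub_mulVec, smul_mulVec, dotProduct_sub, dotProduct_smul, smul_eq_mul]
    rw [this]
    linarith

lemma trace_cyc4 {n : ℕ} (A B C D : Matrix (Fin n) (Fin n) ℝ) :
    (A * B * C * D).trace = (B * (C * D * A)).trace := by
  rw [show A * B * C * D = A * (B * (C * D)) by simp [mul_assoc], trace_mul_comm,
    mul_assoc, mul_assoc]

lemma psd_trace_mul_le {n : ℕ} {A B : Matrix (Fin n) (Fin n) ℝ}
    (hA : A.PosSemidef) (hB : B.PosSemidef) : (A * B).trace ≤ A.trace * B.trace := by
  have h := psd_trace_mul_nonneg (psd_smul_one_sub hA) hB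
  rw [sub_mul, smul_mul_assoc, one_mul, trace_sub, trace_smul, smul_eq_mul] at h
  linarith

/-- Core trace inequality in the proof of the low-rank approximation error bound:
if `K_X − L_X L_Xᵀ` and `K_Y − L_Y L_Yᵀ` are positive semidefinite of trace at
most `ε`, then for every `F`,
`trace(Fᵀ K_Y F K_X) − trace(Fᵀ L_Y L_Yᵀ F L_X L_Xᵀ) ≤ ε ‖F‖_F² (trace K_X + trace K_Y)`,
with `‖F‖_F² = trace(Fᵀ F)`. -/
theorem core_trace_inequality (n mX mY : ℕ) (ε : ℝ)
    (KX KY : Matrix (Fin n) (Fin n) ℝ) (hKX : KX.PosSemidef) (hKY : KY.PosSemidef)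
    (LX : Matrix (Fin n) (Fin mX) ℝ) (LY : Matrix (Fin n) (Fin mY) ℝ)
    (hRX : (KX - LX * LXᵀ).PosSemidef) (hRY : (KY - LY * LYᵀ).PosSemidef)
    (htX : (KX - LX * LXᵀ).trace ≤ ε) (htY : (KY - LY * LYᵀ).trace ≤ ε) :
    ∀ F : Matrix (Fin n) (Fin n) ℝ,
      (Fᵀ * KY * F * KX).trace - (Fᵀ * (LY * LYᵀ) * F * (LX * LXᵀ)).trace ≤
        ε * (Fᵀ * F).trace * (KX.trace + KY.trace) := by
  intro F
  set GX := LX * LXᵀ with hGX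
  set GY := LY * LYᵀ with hGY
  have hGXpsd : GX.PosSemidef := by
    have := posSemidef_self_mul_conjTranspose LX
    rwa [conjTranspose_eq_transpose_of_trivial] at this
  have hGYpsd : GY.PosSemidef := by
    have := posSemidef_self_mul_conjTranspose LY
    rwa [conjTranspose_eq_transpose_of_trivial] at this
  have hFF : (Fᵀ * F).PosSemidef := by
    have := posSemidef_conjTranspose_mul_self F
    rwa [conjTranspose_eq_transpose_of_trivial] at this
  have hFFt : (F * Fᵀ).PosSemidef := by
    have := posSemidef_self_mul_conjTranspose F
    rwa [conjTranspose_eq_transpose_of_trivial] at this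
  have heps : 0 ≤ ε := le_trans (psd_trace_nonneg hRX) htX
  have htrFF : 0 ≤ (Fᵀ * F).trace := psd_trace_nonneg hFF
  have htrKX : 0 ≤ KX.trace := psd_trace_nonneg hKX
  have htrGY : 0 ≤ GY.trace := psd_trace_nonneg hGYpsd
  have hGYle : GY.trace ≤ KY.trace := by
    have := psd_trace_nonneg hRY
    rw [trace_sub] at this; linarith
  -- decomposition
  have hdecomp : (Fᵀ * KY * F * KX).trace - (Fᵀ * GY * F * GX).trace
      = (Fᵀ * (KY - GY) * F * KX).trace + (Fᵀ * GY * F * (KX - GX)).trace := by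
    have : Fᵀ * (KY - GY) * F * KX + Fᵀ * GY * F * (KX - GX)
        = Fᵀ * KY * F * KX - Fᵀ * GY * F * GX := by noncomm_ring
    rw [← trace_sub, ← trace_add, this]
  -- term 1
  have hT1 : (Fᵀ * (KY - GY) * F * KX).trace ≤ ε * (KX.trace * (Fᵀ * F).trace) := by
    have hcyc : (Fᵀ * (KY - GY) * F * KX).trace = ((KY - GY) * (F * KX * Fᵀ)).trace :=
      trace_cyc4 Fᵀ (KY - GY) F KX
    have hFKF : (F * KX * Fᵀ).PosSemidef := by
      have := hKX.mul_mul_conjTranspose_same F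
      rwa [conjTranspose_eq_transpose_of_trivial] at this
    have h1 : ((KY - GY) * (F * KX * Fᵀ)).trace ≤ (KY - GY).trace * (F * KX * Fᵀ).trace :=
      psd_trace_mul_le hRY hFKF
    have h2 : (F * KX * Fᵀ).trace = (KX * (Fᵀ * F)).trace := by
      rw [trace_mul_comm (F * KX) Fᵀ, ← mul_assoc, trace_mul_comm]
    have h3 : (KX * (Fᵀ * F)).trace ≤ KX.trace * (Fᵀ * F).trace :=
      psd_trace_mul_le hKX hFF
    have htrFKF : 0 ≤ (F * KX * Fᵀ).trace := psd_trace_nonneg hFKF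
    calc (Fᵀ * (KY - GY) * F * KX).trace
        ≤ (KY - GY).trace * (F * KX * Fᵀ).trace := by rw [hcyc]; exact h1
      _ ≤ ε * (F * KX * Fᵀ).trace := by
          exact mul_le_mul_of_nonneg_right htY htrFKF
      _ ≤ ε * (KX.trace * (Fᵀ * F).trace) := by
          apply mul_le_mul_of_nonneg_left _ heps
          rw [h2] at *; exact h3
  -- term 2
  have hT2 : (Fᵀ * GY * F * (KX - GX)).trace ≤ ε * (KY.trace * (Fᵀ * F).trace) := by
    have hcyc : (Fᵀ * GY * F * (KX - GX)).trace = ((KX - GX) * (Fᵀ * GY * F)).trace := by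
      rw [trace_mul_comm]
    have hFGF : (Fᵀ * GY * F).PosSemidef := by
      have := hGYpsd.conjTranspose_mul_mul_same F
      rwa [conjTranspose_eq_transpose_of_trivial] at this
    have h1 : ((KX - GX) * (Fᵀ * GY * F)).trace ≤ (KX - GX).trace * (Fᵀ * GY * F).trace :=
      psd_trace_mul_le hRX hFGF
    have h2 : (Fᵀ * GY * F).trace = (GY * (F * Fᵀ)).trace := by
      rw [trace_mul_comm (Fᵀ * GY) F, ← mul_assoc, trace_mul_comm]
    have h3 : (GY * (F * Fᵀ)).trace ≤ GY.trace * (F * Fᵀ).trace :=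
      psd_trace_mul_le hGYpsd hFFt
    have h4 : (F * Fᵀ).trace = (Fᵀ * F).trace := trace_mul_comm F Fᵀ
    have htrFGF : 0 ≤ (Fᵀ * GY * F).trace := psd_trace_nonneg hFGF
    calc (Fᵀ * GY * F * (KX - GX)).trace
        ≤ (KX - GX).trace * (Fᵀ * GY * F).trace := by rw [hcyc]; exact h1
      _ ≤ ε * (Fᵀ * GY * F).trace := mul_le_mul_of_nonneg_right htX htrFGF
      _ ≤ ε * (KY.trace * (Fᵀ * F).trace) := by
          apply mul_le_mul_of_nonneg_left _ heps
          rw [h2, ← h4]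
          calc (GY * (F * Fᵀ)).trace ≤ GY.trace * (F * Fᵀ).trace := h3
            _ ≤ KY.trace * (F * Fᵀ).trace := by
                apply mul_le_mul_of_nonneg_right hGYle
                rw [h4]; exact htrFF
  rw [hdecomp]
  calc (Fᵀ * (KY - GY) * F * KX).trace + (Fᵀ * GY * F * (KX - GX)).trace
      ≤ ε * (KX.trace * (Fᵀ * F).trace) + ε * (KY.trace * (Fᵀ * F).trace) := add_le_add hT1 hT2
    _ = ε * (Fᵀ * F).trace * (KX.trace + KY.trace) := by ring
end

section
/- Let K_X, K_Y ∈ ℝ^{n×n} be symmetric positive semidefinite with pivoted Cholesky structure (B_Xᵀ L_X = I, K_X B_X = L_X, V_X orthogonal, V_X Λ_X V_Xᵀ = L_Xᵀ L_X, Q_X = B_X V_X; analogously for Y), and suppose K_X − L_X L_Xᵀ and K_Y − L_Y L_Yᵀ are positive semidefinite with trace at most ε. Let F = (K_X + nλ I_n)^{-1} for λ > 0, F_ℋ̃ = (L_Y V_Y)ᵀ F (L_X V_X), and F̃ = (L_Y V_Y)ᵀ (L_X V_X)(Λ_X + nλ I_{m_X})^{-1}. Then trace((F − Q_Y F̃ Q_Xᵀ)ᵀ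 K_Y (F − Q_Y F̃ Q_Xᵀ) K_X) ≤ ε · ‖F‖_F² · (trace(K_X) + trace(K_Y)) + ‖F_ℋ̃ − F̃‖_F². -/
open Matrix

namespace LowRankAux


lemma diag_nonneg {n : ℕ} {A : Matrix (Fin n) (Fin n) ℝ} (hA : A.PosSemidef) (i : Fin n) :
    0 ≤ A i i := by
  have h := hA.dotProduct_mulVec_nonneg (Pi.single i 1)
  simpa [dotProduct, mulVec, Pi.single_apply, Finset.mul_sum, mul_ite, ite_mul] using h

lemma trace_nonneg {n : ℕ} {A : Matrix (Fin n) (Fin n) ℝ} (hA : A.PosSemidef) :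
    0 ≤ A.trace := by
  exact Finset.sum_nonneg fun i _ => diag_nonneg hA i

lemma symm_apply {n : ℕ} {A : Matrix (Fin n) (Fin n) ℝ} (hA : A.PosSemidef) (i j : Fin n) :
    A j i = A i j := by
  have := hA.1
  have h := congrFun (congrFun this i) j
  simpa [conjTranspose_apply] using h

lemma sq_entry_le {n : ℕ} {A : Matrix (Fin n) (Fin n) ℝ} (hA : A.PosSemidef) (i j : Fin n) :
    A i j ^ 2 ≤ A i i * A j j := by
  rcases eq_or_ne i j with rfl | hij
  · rw [sq]
  · have key : ∀ t : ℝ, 0 ≤ A j j * (t * t) + (2 * A i j) * t + A i i := by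
      intro t
      have h := hA.dotProduct_mulVec_nonneg (Pi.single i 1 + Pi.single j t)
      have hs : A j i = A i j := symm_apply hA i j
      simp [dotProduct, mulVec, Pi.single_apply, Finset.mul_sum, mul_ite, ite_mul,
        mul_add, add_mul, Finset.sum_add_distrib, hij, hij.symm] at h
      rw [hs] at h
      nlinarith [h]
    have hd := discrim_le_zero key
    rw [discrim] at hd
    nlinarith [hd]



lemma trace_mul_le {A B : Matrix (Fin n) (Fin n) ℝ} (hA : A.PosSemidef) (hB : B.PosSemidef) :
    (A * B).trace ≤ A.trace * B.trace := by
  have key : (A * B).trace = ∑ i, ∑ j, A i j * B i j := by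
    simp only [trace, Matrix.diag, mul_apply]
    exact Finset.sum_congr rfl fun i _ => Finset.sum_congr rfl fun j _ => by
      rw [symm_apply hB j i]
  rw [key]
  have step1 : ∑ i, ∑ j, A i j * B i j ≤
      ∑ i, ∑ j, Real.sqrt (A i i * B i i) * Real.sqrt (A j j * B j j) := by
    refine Finset.sum_le_sum fun i _ => Finset.sum_le_sum fun j _ => ?_
    have h1 : (A i j * B i j) ^ 2 ≤ (A i i * B i i) * (A j j * B j j) := by
      nlinarith [sq_entry_le hA i j, sq_entry_le hB i j, sq_nonneg (A i j), sq_nonneg (B i j),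
        diag_nonneg hA i, diag_nonneg hA j, diag_nonneg hB i, diag_nonneg hB j]
    calc A i j * B i j ≤ |A i j * B i j| := le_abs_self _
      _ = Real.sqrt ((A i j * B i j) ^ 2) := (Real.sqrt_sq_eq_abs _).symm
      _ ≤ Real.sqrt ((A i i * B i i) * (A j j * B j j)) := Real.sqrt_le_sqrt h1
      _ = Real.sqrt (A i i * B i i) * Real.sqrt (A j j * B j j) :=
          Real.sqrt_mul (mul_nonneg (diag_nonneg hA i) (diag_nonneg hB i)) _
  have step2 : ∑ i, ∑ j, Real.sqrt (A i i * B i i) * Real.sqrt (A j j * B j j)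
      = (∑ i, Real.sqrt (A i i * B i i)) ^ 2 := by
    rw [sq, Finset.sum_mul_sum]
  have step3 : (∑ i, Real.sqrt (A i i * B i i)) ^ 2 ≤ (∑ i, A i i) * ∑ i, B i i :=
    Finset.sum_sq_le_sum_mul_sum_of_sq_eq_mul _ (fun i _ => diag_nonneg hA i)
      (fun i _ => diag_nonneg hB i)
      (fun i _ => Real.sq_sqrt (mul_nonneg (diag_nonneg hA i) (diag_nonneg hB i)))
  calc _ ≤ _ := step1
    _ = _ := step2
    _ ≤ _ := step3
    _ = A.trace * B.trace := rfl

lemma trace_key {n mX mY : ℕ}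
    (KX KY F : Matrix (Fin n) (Fin n) ℝ)
    (QX MX : Matrix (Fin n) (Fin mX) ℝ) (QY MY : Matrix (Fin n) (Fin mY) ℝ)
    (Ft : Matrix (Fin mY) (Fin mX) ℝ)
    (hXa : KX * QX = MX) (hXb : QXᵀ * KX = MXᵀ) (hXc : MXᵀ * QX = 1)
    (hYa : KY * QY = MY) (hYb : QYᵀ * KY = MYᵀ) (hYc : QYᵀ * MY = 1) :
    ((F - QY * Ft * QXᵀ)ᵀ * KY * (F - QY * Ft * QXᵀ) * KX).trace
      = ((MYᵀ * F * MX - Ft)ᵀ * (MYᵀ * F * MX - Ft)).trace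
        + (Fᵀ * KY * F * (KX - MX * MXᵀ)).trace
        + (Fᵀ * (KY - MY * MYᵀ) * F * (MX * MXᵀ)).trace := by
  set G := QY * Ft * QXᵀ with hG
  have h1 : (Gᵀ * KY * G * KX).trace = (Ftᵀ * Ft).trace := by
    have hm : Gᵀ * KY * G * KX = QX * (Ftᵀ * (Ft * MXᵀ)) := by
      rw [hG]
      simp only [transpose_mul, transpose_transpose, Matrix.mul_assoc]
      rw [hXb, ← Matrix.mul_assoc KY QY, hYa, ← Matrix.mul_assoc QYᵀ MY, hYc, Matrix.one_mul]
    rw [hm, trace_mul_comm]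
    simp only [Matrix.mul_assoc]
    rw [hXc, Matrix.mul_one]
  have h2 : (Fᵀ * KY * G * KX).trace = ((MYᵀ * F * MX)ᵀ * Ft).trace := by
    have hm : Fᵀ * KY * G * KX = Fᵀ * (MY * (Ft * MXᵀ)) := by
      rw [hG]
      simp only [Matrix.mul_assoc]
      rw [hXb, ← Matrix.mul_assoc KY QY, hYa]
    have hr : (MYᵀ * F * MX)ᵀ * Ft = MXᵀ * (Fᵀ * (MY * Ft)) := by
      simp only [transpose_mul, transpose_transpose, Matrix.mul_assoc]
    have hl : Fᵀ * (MY * (Ft * MXᵀ)) = (Fᵀ * (MY * Ft)) * MXᵀ := by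
      simp only [Matrix.mul_assoc]
    rw [hm, hl, trace_mul_comm, hr]
  have h3 : (Gᵀ * KY * F * KX).trace = (Ftᵀ * (MYᵀ * F * MX)).trace := by
    have hm : Gᵀ * KY * F * KX = QX * (Ftᵀ * (MYᵀ * (F * KX))) := by
      rw [hG]
      simp only [transpose_mul, transpose_transpose, Matrix.mul_assoc]
      rw [← Matrix.mul_assoc QYᵀ KY, hYb]
    rw [hm, trace_mul_comm]
    simp only [Matrix.mul_assoc]
    rw [hXa]
  have h4 : (Fᵀ * (MY * MYᵀ) * F * (MX * MXᵀ)).trace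
      = ((MYᵀ * F * MX)ᵀ * (MYᵀ * F * MX)).trace := by
    have hr : (MYᵀ * F * MX)ᵀ * (MYᵀ * F * MX) = MXᵀ * (Fᵀ * (MY * (MYᵀ * (F * MX)))) := by
      simp only [transpose_mul, transpose_transpose, Matrix.mul_assoc]
    have hl : Fᵀ * (MY * MYᵀ) * F * (MX * MXᵀ) = (Fᵀ * (MY * (MYᵀ * (F * MX)))) * MXᵀ := by
      simp only [Matrix.mul_assoc]
    rw [hl, trace_mul_comm, hr]
  have e1 : ((F - G)ᵀ * KY * (F - G) * KX).trace
      = (Fᵀ * KY * F * KX).trace - (Fᵀ * KY * G * KX).trace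
        - (Gᵀ * KY * F * KX).trace + (Gᵀ * KY * G * KX).trace := by
    simp only [transpose_sub, Matrix.sub_mul, Matrix.mul_sub, trace_sub]
    ring
  have e2 : ((MYᵀ * F * MX - Ft)ᵀ * (MYᵀ * F * MX - Ft)).trace
      = ((MYᵀ * F * MX)ᵀ * (MYᵀ * F * MX)).trace - ((MYᵀ * F * MX)ᵀ * Ft).trace
        - (Ftᵀ * (MYᵀ * F * MX)).trace + (Ftᵀ * Ft).trace := by
    simp only [transpose_sub, Matrix.sub_mul, Matrix.mul_sub, trace_sub]
    ring
  have e3 : (Fᵀ * KY * F * (KX - MX * MXᵀ)).trace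
      = (Fᵀ * KY * F * KX).trace - (Fᵀ * KY * F * (MX * MXᵀ)).trace := by
    simp only [Matrix.mul_sub, trace_sub]
  have e4 : (Fᵀ * (KY - MY * MYᵀ) * F * (MX * MXᵀ)).trace
      = (Fᵀ * KY * F * (MX * MXᵀ)).trace - (Fᵀ * (MY * MYᵀ) * F * (MX * MXᵀ)).trace := by
    simp only [Matrix.mul_sub, Matrix.sub_mul, trace_sub]
  rw [e1, e2, e3, e4, h1, h2, h3, h4]
  ring


end LowRankAux

open LowRankAux

/-- Matrix form of Theorem 4.1 (low-rank approximation error): with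
`F = (K_X + nλ I)⁻¹`, `F_ℋ̃ = (L_Y V_Y)ᵀ F (L_X V_X)` and
`F̃ = (L_Y V_Y)ᵀ (L_X V_X)(Λ_X + nλ I)⁻¹`,
`‖μ̂ − μ̃‖²_ℋ ≤ ε ‖F‖_F² (trace K_X + trace K_Y) + ‖F_ℋ̃ − F̃‖_F²`. -/
theorem low_rank_approximation_error (n mX mY : ℕ) (ε : ℝ)
    (KX KY : Matrix (Fin n) (Fin n) ℝ) (hKX : KX.PosSemidef) (hKY : KY.PosSemidef)
    (LX BX : Matrix (Fin n) (Fin mX) ℝ) (hBLX : BXᵀ * LX = 1) (hKBX : KX * BX = LX)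
    (VX LamX : Matrix (Fin mX) (Fin mX) ℝ) (hVX : VXᵀ * VX = 1) (hVX' : VX * VXᵀ = 1)
    (hLamX : LamX.IsDiag) (hspecX : VX * LamX * VXᵀ = LXᵀ * LX)
    (LY BY : Matrix (Fin n) (Fin mY) ℝ) (hBLY : BYᵀ * LY = 1) (hKBY : KY * BY = LY)
    (VY LamY : Matrix (Fin mY) (Fin mY) ℝ) (hVY : VYᵀ * VY = 1) (hVY' : VY * VYᵀ = 1)
    (hLamY : LamY.IsDiag) (hspecY : VY * LamY * VYᵀ = LYᵀ * LY)
    (hRX : (KX - LX * LXᵀ).PosSemidef) (hRY : (KY - LY * LYᵀ).PosSemidef)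
    (htX : (KX - LX * LXᵀ).trace ≤ ε) (htY : (KY - LY * LYᵀ).trace ≤ ε)
    (lam : ℝ) (hlam : 0 < lam) :
    let F : Matrix (Fin n) (Fin n) ℝ := (KX + ((n : ℝ) * lam) • 1)⁻¹
    let FH : Matrix (Fin mY) (Fin mX) ℝ := (LY * VY)ᵀ * F * (LX * VX)
    let Ft : Matrix (Fin mY) (Fin mX) ℝ :=
      (LY * VY)ᵀ * (LX * VX) * (LamX + ((n : ℝ) * lam) • 1)⁻¹
    ((F - (BY * VY) * Ft * (BX * VX)ᵀ)ᵀ * KY *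
      (F - (BY * VY) * Ft * (BX * VX)ᵀ) * KX).trace ≤
      ε * (Fᵀ * F).trace * (KX.trace + KY.trace) +
        ((FH - Ft)ᵀ * (FH - Ft)).trace := by
  intro F FH Ft
  have hFH : FH = (LY * VY)ᵀ * F * (LX * VX) := rfl
  have hKXt : KXᵀ = KX := by
    have h : KXᴴ = KX := hKX.1
    rwa [conjTranspose_eq_transpose_of_trivial] at h
  have hKYt : KYᵀ = KY := by
    have h : KYᴴ = KY := hKY.1
    rwa [conjTranspose_eq_transpose_of_trivial] at h
  have hXa : KX * (BX * VX) = LX * VX := by rw [← Matrix.mul_assoc, hKBX]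
  have hXb : (BX * VX)ᵀ * KX = (LX * VX)ᵀ := by
    calc (BX * VX)ᵀ * KX = (KXᵀ * (BX * VX))ᵀ := by simp [Matrix.mul_assoc]
      _ = (LX * VX)ᵀ := by rw [hKXt, hXa]
  have hLB : LXᵀ * BX = 1 := by
    have h := congrArg Matrix.transpose hBLX
    simpa [transpose_mul] using h
  have hXc : (LX * VX)ᵀ * (BX * VX) = 1 := by
    calc (LX * VX)ᵀ * (BX * VX) = VXᵀ * (LXᵀ * BX * VX) := by
          simp only [transpose_mul, Matrix.mul_assoc]
      _ = 1 := by rw [hLB, Matrix.one_mul, hVX]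
  have hYa : KY * (BY * VY) = LY * VY := by rw [← Matrix.mul_assoc, hKBY]
  have hYb : (BY * VY)ᵀ * KY = (LY * VY)ᵀ := by
    calc (BY * VY)ᵀ * KY = (KYᵀ * (BY * VY))ᵀ := by simp [Matrix.mul_assoc]
      _ = (LY * VY)ᵀ := by rw [hKYt, hYa]
  have hYc : (BY * VY)ᵀ * (LY * VY) = 1 := by
    calc (BY * VY)ᵀ * (LY * VY) = VYᵀ * (BYᵀ * LY * VY) := by
          simp only [transpose_mul, Matrix.mul_assoc]
      _ = 1 := by rw [hBLY, Matrix.one_mul, hVY]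
  have hMMX : (LX * VX) * (LX * VX)ᵀ = LX * LXᵀ := by
    calc (LX * VX) * (LX * VX)ᵀ = LX * (VX * VXᵀ * LXᵀ) := by
          simp only [transpose_mul, Matrix.mul_assoc]
      _ = LX * LXᵀ := by rw [hVX', Matrix.one_mul]
  have hMMY : (LY * VY) * (LY * VY)ᵀ = LY * LYᵀ := by
    calc (LY * VY) * (LY * VY)ᵀ = LY * (VY * VYᵀ * LYᵀ) := by
          simp only [transpose_mul, Matrix.mul_assoc]
      _ = LY * LYᵀ := by rw [hVY', Matrix.one_mul]
  have hkey := trace_key KX KY F (BX * VX) (LX * VX) (BY * VY) (LY * VY) Ft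
    hXa hXb hXc hYa hYb hYc
  rw [hFH, hkey, hMMX, hMMY]
  -- positive semidefiniteness facts
  have psd1 : (Fᵀ * KY * F).PosSemidef := by
    simpa [conjTranspose_eq_transpose_of_trivial] using hKY.conjTranspose_mul_mul_same F
  have psd2 : (Fᵀ * (KY - LY * LYᵀ) * F).PosSemidef := by
    simpa [conjTranspose_eq_transpose_of_trivial] using hRY.conjTranspose_mul_mul_same F
  have psdFF : (F * Fᵀ).PosSemidef := by
    simpa [conjTranspose_eq_transpose_of_trivial] using Matrix.posSemidef_self_mul_conjTranspose F
  have psdLL : (LX * LXᵀ).PosSemidef := by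
    simpa [conjTranspose_eq_transpose_of_trivial] using Matrix.posSemidef_self_mul_conjTranspose LX
  have hε : 0 ≤ ε := le_trans (trace_nonneg hRX) htX
  have hS : 0 ≤ (Fᵀ * F).trace := by
    have := trace_nonneg psdFF
    rwa [trace_mul_comm] at this
  -- bound the first remainder term
  have c1 : (Fᵀ * KY * F).trace ≤ KY.trace * (Fᵀ * F).trace := by
    have e : (Fᵀ * KY * F).trace = (KY * (F * Fᵀ)).trace := by
      rw [trace_mul_cycle, trace_mul_comm]
    rw [e]
    calc (KY * (F * Fᵀ)).trace ≤ KY.trace * (F * Fᵀ).trace := trace_mul_le hKY psdFF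
      _ = KY.trace * (Fᵀ * F).trace := by rw [trace_mul_comm F Fᵀ]
  have f1 : (Fᵀ * KY * F * (KX - LX * LXᵀ)).trace ≤ KY.trace * (Fᵀ * F).trace * ε := by
    calc (Fᵀ * KY * F * (KX - LX * LXᵀ)).trace
        ≤ (Fᵀ * KY * F).trace * (KX - LX * LXᵀ).trace := trace_mul_le psd1 hRX
      _ ≤ (Fᵀ * KY * F).trace * ε :=
          mul_le_mul_of_nonneg_left htX (trace_nonneg psd1)
      _ ≤ KY.trace * (Fᵀ * F).trace * ε := mul_le_mul_of_nonneg_right c1 hε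
  -- bound the second remainder term
  have c2 : (Fᵀ * (KY - LY * LYᵀ) * F).trace ≤ ε * (Fᵀ * F).trace := by
    have e : (Fᵀ * (KY - LY * LYᵀ) * F).trace = ((KY - LY * LYᵀ) * (F * Fᵀ)).trace := by
      rw [trace_mul_cycle, trace_mul_comm]
    rw [e]
    calc ((KY - LY * LYᵀ) * (F * Fᵀ)).trace
        ≤ (KY - LY * LYᵀ).trace * (F * Fᵀ).trace := trace_mul_le hRY psdFF
      _ ≤ ε * (F * Fᵀ).trace := mul_le_mul_of_nonneg_right htY (trace_nonneg psdFF)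
      _ = ε * (Fᵀ * F).trace := by rw [trace_mul_comm F Fᵀ]
  have d2 : (LX * LXᵀ).trace ≤ KX.trace := by
    have h := trace_nonneg hRX
    rw [trace_sub] at h
    linarith
  have f2 : (Fᵀ * (KY - LY * LYᵀ) * F * (LX * LXᵀ)).trace
      ≤ ε * (Fᵀ * F).trace * KX.trace := by
    calc (Fᵀ * (KY - LY * LYᵀ) * F * (LX * LXᵀ)).trace
        ≤ (Fᵀ * (KY - LY * LYᵀ) * F).trace * (LX * LXᵀ).trace := trace_mul_le psd2 psdLL
      _ ≤ ε * (Fᵀ * F).trace * KX.trace :=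
          mul_le_mul c2 d2 (trace_nonneg psdLL) (mul_nonneg hε hS)
  nlinarith [f1, f2]
end

section
/- Let K_X, K_Y ∈ ℝ^{n×n} be symmetric positive semidefinite, L_X ∈ ℝ^{n×m_X}, L_Y ∈ ℝ^{n×m_Y} with K_X − L_X L_Xᵀ and K_Y − L_Y L_Yᵀ positive semidefinite of trace at most ε, and let V_X, V_Y be orthogonal with V_X Λ_X V_Xᵀ = L_Xᵀ L_X, Λ_X diagonal. For λ > 0 set F = (K_X + nλ I_n)^{-1}, F_ℋ̃ = (L_Y V_Y)ᵀ F (L_X V_X), and F̃ = (L_Y V_Y)ᵀ (L_X V_X)(Λ_X + nλ I_{m_X})^{-1}. Then ‖F_ℋ̃ − F̃‖_F² ≤ (ε² / (nλ)⁴) · trace(K_X) · trace(K_Y). -/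
open Matrix

set_option linter.unusedSectionVars false
set_option maxHeartbeats 1000000

section AuxLemmas
variable {n m : Type*} [Fintype n] [Fintype m] [DecidableEq n] [DecidableEq m]


lemma trans_eq_conj (A : Matrix n m ℝ) : Aᴴ = Aᵀ :=
  conjTranspose_eq_transpose_of_trivial A

lemma hermitian_smul {M : Matrix n n ℝ} (hM : M.IsHermitian) (c : ℝ) :
    (c • M).IsHermitian := by
  unfold Matrix.IsHermitian
  rw [Matrix.conjTranspose_smul, star_trivial, hM.eq]

open scoped MatrixOrder in
noncomputable def Matrix.PosSemidef.sqrt {S : Matrix n n ℝ} (_hS : S.PosSemidef) : Matrix n n ℝ :=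
  CFC.sqrt S

open scoped MatrixOrder in
lemma Matrix.PosSemidef.sqrt_mul_self {S : Matrix n n ℝ} (hS : S.PosSemidef) :
    hS.sqrt * hS.sqrt = S :=
  CFC.sqrt_mul_sqrt_self S hS.nonneg

open scoped MatrixOrder in
lemma Matrix.PosSemidef.posSemidef_sqrt {S : Matrix n n ℝ} (hS : S.PosSemidef) :
    hS.sqrt.PosSemidef :=
  (CFC.sqrt_nonneg S).posSemidef

lemma Matrix.posSemidef_iff_eq_transpose_mul_self {S : Matrix n n ℝ} :
    S.PosSemidef ↔ ∃ B : Matrix n n ℝ, S = Bᴴ * B := by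
  refine ⟨fun hS => ⟨hS.sqrt, ?_⟩, fun ⟨B, hB⟩ => hB ▸ Matrix.posSemidef_conjTranspose_mul_self B⟩
  rw [hS.posSemidef_sqrt.1.eq, hS.sqrt_mul_self]

lemma diag_nonneg {M : Matrix n n ℝ} (hM : M.PosSemidef) (i : n) : 0 ≤ M i i := by
  simpa using hM.dotProduct_mulVec_nonneg (Pi.single i 1)

lemma trace_nonneg' {M : Matrix n n ℝ} (hM : M.PosSemidef) : 0 ≤ M.trace :=
  Finset.sum_nonneg fun i _ => diag_nonneg hM i

lemma smul_psd {M : Matrix n n ℝ} {c : ℝ} (hc : 0 ≤ c) (hM : M.PosSemidef) :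
    (c • M).PosSemidef := by
  refine .of_dotProduct_mulVec_nonneg (hermitian_smul hM.1 c) fun x => ?_
  rw [Matrix.smul_mulVec, dotProduct_smul, smul_eq_mul]
  exact mul_nonneg hc (by simpa using hM.dotProduct_mulVec_nonneg x)

lemma posDef_smul_one {c : ℝ} (hc : 0 < c) : (c • (1 : Matrix n n ℝ)).PosDef := by
  rw [← Matrix.diagonal_one, ← Matrix.diagonal_smul]
  exact Matrix.posDef_diagonal_iff.mpr fun i => by simpa using hc



lemma le_trace_smul_one {S : Matrix n n ℝ} (hS : S.PosSemidef) :
    (S.trace • (1 : Matrix n n ℝ) - S).PosSemidef := by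
  obtain ⟨B, rfl⟩ := (Matrix.posSemidef_iff_eq_transpose_mul_self).mp hS
  rw [trans_eq_conj] at hS ⊢
  refine .of_dotProduct_mulVec_nonneg ((hermitian_smul isHermitian_one _).sub hS.1) fun x => ?_
  rw [star_trivial, Matrix.sub_mulVec, dotProduct_sub, Matrix.smul_mulVec, dotProduct_smul,
    smul_eq_mul, Matrix.one_mulVec, sub_nonneg]
  have h1 : x ⬝ᵥ (Bᵀ * B) *ᵥ x = ∑ i, (∑ j, B i j * x j) ^ 2 := by
    rw [← Matrix.mulVec_mulVec, Matrix.dotProduct_mulVec, Matrix.vecMul_transpose]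
    simp [dotProduct, Matrix.mulVec, pow_two]
  have h2 : (Bᵀ * B).trace = ∑ i, ∑ j, B i j ^ 2 := by
    simp [Matrix.trace, Matrix.diag, Matrix.mul_apply, pow_two]
    rw [Finset.sum_comm]
  rw [h1, h2, Finset.sum_mul]
  refine Finset.sum_le_sum fun i _ => ?_
  calc (∑ j, B i j * x j) ^ 2 ≤ (∑ j, B i j ^ 2) * ∑ j, x j ^ 2 :=
        Finset.sum_mul_sq_le_sq_mul_sq _ _ _
    _ = (∑ j, B i j ^ 2) * (x ⬝ᵥ x) := by simp [dotProduct, pow_two]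

lemma trace_conj_mono {S T : Matrix n n ℝ} (h : (T - S).PosSemidef)
    (X : Matrix n m ℝ) : (Xᵀ * S * X).trace ≤ (Xᵀ * T * X).trace := by
  have h2 := (h.conjTranspose_mul_mul_same X)
  rw [trans_eq_conj] at h2
  have h3 := trace_nonneg' h2
  rw [Matrix.mul_sub, Matrix.sub_mul, Matrix.trace_sub, sub_nonneg] at h3
  exact h3



lemma sq_le_of_le_smul_one {S : Matrix n n ℝ} {α : ℝ} (hS : S.PosSemidef) (hα : 0 ≤ α)
    (h : (α • (1 : Matrix n n ℝ) - S).PosSemidef) :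
    (α ^ 2 • (1 : Matrix n n ℝ) - S * S).PosSemidef := by
  have h1 : (hS.sqrt * (α • (1 : Matrix n n ℝ) - S) * hS.sqrtᴴ).PosSemidef :=
    h.mul_mul_conjTranspose_same hS.sqrt
  rw [hS.posSemidef_sqrt.1.eq] at h1
  have h2 : hS.sqrt * (α • (1 : Matrix n n ℝ) - S) * hS.sqrt = α • S - S * S := by
    rw [Matrix.mul_sub, Matrix.sub_mul, Matrix.mul_smul, Matrix.mul_one,
      Matrix.smul_mul, hS.sqrt_mul_self]
    congr 1
    calc hS.sqrt * S * hS.sqrt = hS.sqrt * (hS.sqrt * hS.sqrt) * hS.sqrt := by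
          rw [hS.sqrt_mul_self]
      _ = (hS.sqrt * hS.sqrt) * (hS.sqrt * hS.sqrt) := by
          simp only [Matrix.mul_assoc]
      _ = S * S := by rw [hS.sqrt_mul_self]
  rw [h2] at h1
  have h3 : (α • (α • (1 : Matrix n n ℝ) - S)).PosSemidef := smul_psd hα h
  have h4 := h3.add h1
  have h5 : α • (α • (1 : Matrix n n ℝ) - S) + (α • S - S * S)
      = α ^ 2 • (1 : Matrix n n ℝ) - S * S := by
    rw [smul_sub, smul_smul, ← pow_two]
    abel
  rwa [h5] at h4

lemma inv_sq_le {Q : Matrix n n ℝ} {c : ℝ} (hQ : Q.PosSemidef) (hc : 0 < c) :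
    (Q + c • (1 : Matrix n n ℝ)).PosDef ∧
    ((Q + c • (1 : Matrix n n ℝ))⁻¹).PosSemidef ∧
    (Q + c • (1 : Matrix n n ℝ)) * (Q + c • (1 : Matrix n n ℝ))⁻¹ = 1 ∧
    (Q + c • (1 : Matrix n n ℝ))⁻¹ * (Q + c • (1 : Matrix n n ℝ)) = 1 ∧
    (((c ^ 2)⁻¹) • (1 : Matrix n n ℝ) -
      (Q + c • (1 : Matrix n n ℝ))⁻¹ * (Q + c • (1 : Matrix n n ℝ))⁻¹).PosSemidef := by
  set P := Q + c • (1 : Matrix n n ℝ) with hPdef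
  have hP : P.PosDef := Matrix.PosDef.posSemidef_add hQ (posDef_smul_one hc)
  have hdet : IsUnit P.det := (Matrix.isUnit_iff_isUnit_det P).mp hP.isUnit
  have hPF : P * P⁻¹ = 1 := Matrix.mul_nonsing_inv P hdet
  have hFP : P⁻¹ * P = 1 := Matrix.nonsing_inv_mul P hdet
  have hF : (P⁻¹).PosSemidef := hP.inv.posSemidef
  have hFFh : (P⁻¹ * P⁻¹).IsHermitian := by
    unfold Matrix.IsHermitian
    rw [Matrix.conjTranspose_mul, hF.1.eq]
  refine ⟨hP, hF, hPF, hFP,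
    .of_dotProduct_mulVec_nonneg ((hermitian_smul isHermitian_one _).sub hFFh) fun x => ?_⟩
  rw [star_trivial, Matrix.sub_mulVec, dotProduct_sub, Matrix.smul_mulVec,
    dotProduct_smul, smul_eq_mul, Matrix.one_mulVec, sub_nonneg]
  set w := P⁻¹ *ᵥ x with hw
  have hx : x = P *ᵥ w := by
    rw [hw, Matrix.mulVec_mulVec, hPF, Matrix.one_mulVec]
  have hsym : P⁻¹ᵀ = P⁻¹ := by rw [← trans_eq_conj]; exact hF.1.eq
  have e1 : x ⬝ᵥ (P⁻¹ * P⁻¹) *ᵥ x = w ⬝ᵥ w := by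
    rw [← Matrix.mulVec_mulVec, Matrix.dotProduct_mulVec]
    congr 1
    rw [← hsym, Matrix.vecMul_transpose]
  have e2 : x ⬝ᵥ x = (Q *ᵥ w) ⬝ᵥ (Q *ᵥ w) + 2 * c * (w ⬝ᵥ Q *ᵥ w) + c ^ 2 * (w ⬝ᵥ w) := by
    conv_lhs => rw [hx]
    rw [hPdef, Matrix.add_mulVec, Matrix.smul_mulVec, Matrix.one_mulVec,
      dotProduct_add, add_dotProduct, add_dotProduct, dotProduct_smul,
      smul_dotProduct, smul_dotProduct, smul_eq_mul, smul_eq_mul, smul_eq_mul]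
    have e3 : (Q *ᵥ w) ⬝ᵥ (c • w) = c * ((Q *ᵥ w) ⬝ᵥ w) := by
      rw [dotProduct_smul, smul_eq_mul]
    have e4 : (Q *ᵥ w) ⬝ᵥ w = w ⬝ᵥ Q *ᵥ w := by
      rw [dotProduct_comm]
    have e5 : w ⬝ᵥ (c • w) = c * (w ⬝ᵥ w) := by
      rw [dotProduct_smul, smul_eq_mul]
    rw [e4, e5]
    ring
  have hq1 : 0 ≤ (Q *ᵥ w) ⬝ᵥ (Q *ᵥ w) := Finset.sum_nonneg fun i _ => mul_self_nonneg _
  have hq2 : 0 ≤ w ⬝ᵥ Q *ᵥ w := by simpa using hQ.dotProduct_mulVec_nonneg w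
  rw [e1, e2]
  have hc2 : (0:ℝ) < c ^ 2 := by positivity
  rw [le_inv_mul_iff₀ hc2]
  have h6 : 0 ≤ 2 * c * (w ⬝ᵥ Q *ᵥ w) := by positivity
  linarith

lemma conj_smul_one_trace (X : Matrix n m ℝ) (α : ℝ) :
    (Xᵀ * (α • (1 : Matrix n n ℝ)) * X).trace = α * (Xᵀ * X).trace := by
  rw [Matrix.mul_smul, Matrix.mul_one, Matrix.smul_mul, Matrix.trace_smul, smul_eq_mul]

end AuxLemmas

/-- Proposition 4.2 (estimation of the coefficient error): with
`F = (K_X + nλ I)⁻¹`, `F_ℋ̃ = (L_Y V_Y)ᵀ F (L_X V_X)` and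
`F̃ = (L_Y V_Y)ᵀ (L_X V_X)(Λ_X + nλ I)⁻¹`, if the pivoted Cholesky residuals are
positive semidefinite with trace at most `ε`, then
`‖F_ℋ̃ − F̃‖_F² ≤ (ε²/(nλ)⁴) trace(K_X) trace(K_Y)`. -/
theorem coefficient_error_bound (n mX mY : ℕ) (ε : ℝ)
    (KX KY : Matrix (Fin n) (Fin n) ℝ) (hKX : KX.PosSemidef) (hKY : KY.PosSemidef)
    (LX : Matrix (Fin n) (Fin mX) ℝ) (LY : Matrix (Fin n) (Fin mY) ℝ)
    (hRX : (KX - LX * LXᵀ).PosSemidef) (hRY : (KY - LY * LYᵀ).PosSemidef)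
    (htX : (KX - LX * LXᵀ).trace ≤ ε) (htY : (KY - LY * LYᵀ).trace ≤ ε)
    (VX LamX : Matrix (Fin mX) (Fin mX) ℝ) (hVX : VXᵀ * VX = 1) (hVX' : VX * VXᵀ = 1)
    (hLamX : LamX.IsDiag) (hspecX : VX * LamX * VXᵀ = LXᵀ * LX)
    (VY : Matrix (Fin mY) (Fin mY) ℝ) (hVY : VYᵀ * VY = 1) (hVY' : VY * VYᵀ = 1)
    (lam : ℝ) (hlam : 0 < lam) :
    let F : Matrix (Fin n) (Fin n) ℝ := (KX + ((n : ℝ) * lam) • 1)⁻¹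
    let FH : Matrix (Fin mY) (Fin mX) ℝ := (LY * VY)ᵀ * F * (LX * VX)
    let Ft : Matrix (Fin mY) (Fin mX) ℝ :=
      (LY * VY)ᵀ * (LX * VX) * (LamX + ((n : ℝ) * lam) • 1)⁻¹
    ((FH - Ft)ᵀ * (FH - Ft)).trace ≤
      ε ^ 2 / ((n : ℝ) * lam) ^ 4 * KX.trace * KY.trace := by
  intro F FH Ft
  have hF : F = (KX + ((n : ℝ) * lam) • 1)⁻¹ := rfl
  have hFH : FH = (LY * VY)ᵀ * F * (LX * VX) := rfl
  have hFt : Ft = (LY * VY)ᵀ * (LX * VX) * (LamX + ((n : ℝ) * lam) • 1)⁻¹ := rfl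
  rcases Nat.eq_zero_or_pos n with hn | hn
  · subst hn
    have hLXVX : LX * VX = (0 : Matrix (Fin 0) (Fin mX) ℝ) := by
      ext i j; exact i.elim0
    have h1 : FH - Ft = 0 := by
      rw [hFH, hFt, hLXVX, Matrix.mul_zero, Matrix.mul_zero, Matrix.zero_mul, sub_zero]
    rw [h1, Matrix.transpose_zero, Matrix.mul_zero, Matrix.trace_zero,
      Matrix.trace_eq_zero_of_isEmpty KX]
    simp
  -- main case
  have hc : (0:ℝ) < (n : ℝ) * lam := by
    have h0 : (0:ℝ) < (n:ℝ) := by exact_mod_cast hn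
    positivity
  set c := (n : ℝ) * lam with hcdef
  set RX := KX - LX * LXᵀ with hRXdef
  set G := (LamX + c • (1 : Matrix (Fin mX) (Fin mX) ℝ))⁻¹ with hGdef
  -- basic PSD facts
  have hLL : (LXᵀ * LX).PosSemidef := by
    have h := Matrix.posSemidef_conjTranspose_mul_self LX
    rwa [trans_eq_conj] at h
  have hconjVX : VXᵀ * (VX * LamX * VXᵀ) * VX = LamX := by
    calc VXᵀ * (VX * LamX * VXᵀ) * VX
        = (VXᵀ * VX) * LamX * (VXᵀ * VX) := by simp only [Matrix.mul_assoc]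
      _ = LamX := by rw [hVX, Matrix.one_mul, Matrix.mul_one]
  have hLam : LamX.PosSemidef := by
    have h := hLL.conjTranspose_mul_mul_same VX
    rw [trans_eq_conj, ← hspecX, hconjVX] at h
    exact h
  obtain ⟨hP, hFpsd, hPF, hFP, hFsq⟩ := inv_sq_le hKX hc
  obtain ⟨hPL, hGpsd, hPG, hGP, hGsq⟩ := inv_sq_le hLam hc
  rw [← hGdef] at hGpsd hPG hGP hGsq
  -- the key identity
  have hBPL : (LX * VX) * (LamX + c • 1) = (LX * LXᵀ + c • 1) * (LX * VX) := by
    rw [Matrix.mul_add, Matrix.add_mul]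
    congr 1
    · calc (LX * VX) * LamX
          = LX * VX * LamX * (VXᵀ * VX) := by rw [hVX, Matrix.mul_one]
        _ = LX * (VX * LamX * VXᵀ) * VX := by simp only [Matrix.mul_assoc]
        _ = LX * (LXᵀ * LX) * VX := by rw [hspecX]
        _ = LX * LXᵀ * (LX * VX) := by simp only [Matrix.mul_assoc]
    · rw [Matrix.mul_smul, Matrix.smul_mul, Matrix.mul_one, Matrix.one_mul]
  have hsplit : LX * LXᵀ + c • (1 : Matrix (Fin n) (Fin n) ℝ)
      = (KX + c • 1) - RX := by
    rw [hRXdef]; abel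
  have hB1 : LX * VX = ((KX + c • 1) - RX) * ((LX * VX) * G) := by
    calc LX * VX = (LX * VX) * ((LamX + c • 1) * G) := by rw [hPG, Matrix.mul_one]
      _ = ((LX * VX) * (LamX + c • 1)) * G := (Matrix.mul_assoc _ _ _).symm
      _ = ((LX * LXᵀ + c • 1) * (LX * VX)) * G := by rw [hBPL]
      _ = (((KX + c • 1) - RX) * (LX * VX)) * G := by rw [hsplit]
      _ = ((KX + c • 1) - RX) * ((LX * VX) * G) := Matrix.mul_assoc _ _ _
  have hFB : F * (LX * VX) = (LX * VX) * G - F * (RX * ((LX * VX) * G)) := by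
    conv_lhs => rw [hB1]
    rw [Matrix.sub_mul, Matrix.mul_sub, ← Matrix.mul_assoc, hF, hFP, Matrix.one_mul, ← hF]
  set W := (KX + c • (1 : Matrix (Fin n) (Fin n) ℝ))⁻¹ with hWdef
  have key : FH - Ft = -((LY * VY)ᵀ * (F * (RX * ((LX * VX) * G)))) := by
    rw [hFH, hFt, Matrix.mul_assoc ((LY * VY)ᵀ) F (LX * VX), hFB,
      Matrix.mul_sub, Matrix.mul_assoc ((LY * VY)ᵀ) (LX * VX) G]
    abel
  rw [key, Matrix.transpose_neg, Matrix.neg_mul, Matrix.mul_neg, neg_neg, hF]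
  set X3 := (LX * VX) * G with hX3def
  set X2 := RX * X3 with hX2def
  set X1 := W * X2 with hX1def
  -- step 0 : rewrite the trace
  have hAA : (LY * VY) * (LY * VY)ᵀ = LY * LYᵀ := by
    rw [Matrix.transpose_mul]
    calc LY * VY * (VYᵀ * LYᵀ) = LY * (VY * VYᵀ) * LYᵀ := by simp only [Matrix.mul_assoc]
      _ = LY * LYᵀ := by rw [hVY', Matrix.mul_one]
  have hMM : ((LY * VY)ᵀ * X1)ᵀ * ((LY * VY)ᵀ * X1) = X1ᵀ * (LY * LYᵀ) * X1 := by
    rw [Matrix.transpose_mul, Matrix.transpose_transpose]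
    calc X1ᵀ * (LY * VY) * ((LY * VY)ᵀ * X1)
        = X1ᵀ * ((LY * VY) * (LY * VY)ᵀ) * X1 := by simp only [Matrix.mul_assoc]
      _ = X1ᵀ * (LY * LYᵀ) * X1 := by rw [hAA]
  rw [hMM]
  -- step 1
  have hKYtr : 0 ≤ KY.trace := trace_nonneg' hKY
  have hLLY : (LY * LYᵀ).PosSemidef := by
    have h := Matrix.posSemidef_self_mul_conjTranspose LY
    rwa [trans_eq_conj] at h
  have htrY : (LY * LYᵀ).trace ≤ KY.trace := by
    have h := trace_nonneg' hRY
    rw [Matrix.trace_sub] at h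
    linarith
  have hYY : (KY.trace • (1 : Matrix (Fin n) (Fin n) ℝ) - LY * LYᵀ).PosSemidef := by
    have h1 := le_trace_smul_one hLLY
    have h2 : KY.trace • (1 : Matrix (Fin n) (Fin n) ℝ) - LY * LYᵀ
        = (KY.trace - (LY * LYᵀ).trace) • (1 : Matrix (Fin n) (Fin n) ℝ)
          + ((LY * LYᵀ).trace • 1 - LY * LYᵀ) := by
      rw [sub_smul]; abel
    rw [h2]
    exact (smul_psd (by linarith) Matrix.PosSemidef.one).add h1
  have s1 : (X1ᵀ * (LY * LYᵀ) * X1).trace ≤ KY.trace * (X1ᵀ * X1).trace := by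
    have h := trace_conj_mono hYY X1
    rwa [conj_smul_one_trace] at h
  -- step 2
  have hFsym : Wᵀ = W := by rw [← trans_eq_conj]; exact hFpsd.1.eq
  have hX1e : X1ᵀ * X1 = X2ᵀ * (W * W) * X2 := by
    rw [hX1def, Matrix.transpose_mul, hFsym]
    simp only [Matrix.mul_assoc]
  have s2 : (X1ᵀ * X1).trace ≤ (c ^ 2)⁻¹ * (X2ᵀ * X2).trace := by
    rw [hX1e]
    have h := trace_conj_mono hFsq X2
    rwa [conj_smul_one_trace] at h
  -- step 3
  have hε : 0 ≤ ε := le_trans (trace_nonneg' hRX) htX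
  have hRXsym : RXᵀ = RX := by rw [← trans_eq_conj]; exact hRX.1.eq
  have hRXe : (ε • (1 : Matrix (Fin n) (Fin n) ℝ) - RX).PosSemidef := by
    have h1 := le_trace_smul_one hRX
    have h2 : ε • (1 : Matrix (Fin n) (Fin n) ℝ) - RX
        = (ε - RX.trace) • (1 : Matrix (Fin n) (Fin n) ℝ) + (RX.trace • 1 - RX) := by
      rw [sub_smul]; abel
    rw [h2]
    exact (smul_psd (by linarith) Matrix.PosSemidef.one).add h1
  have hRXsq := sq_le_of_le_smul_one hRX hε hRXe
  have hX2e : X2ᵀ * X2 = X3ᵀ * (RX * RX) * X3 := by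
    rw [hX2def, Matrix.transpose_mul, hRXsym]
    simp only [Matrix.mul_assoc]
  have s3 : (X2ᵀ * X2).trace ≤ ε ^ 2 * (X3ᵀ * X3).trace := by
    rw [hX2e]
    have h := trace_conj_mono hRXsq X3
    rwa [conj_smul_one_trace] at h
  -- step 4
  have hGsym : Gᵀ = G := by rw [← trans_eq_conj]; exact hGpsd.1.eq
  have hBB : (LX * VX)ᵀ * (LX * VX) = LamX := by
    rw [Matrix.transpose_mul]
    calc VXᵀ * LXᵀ * (LX * VX) = VXᵀ * (LXᵀ * LX) * VX := by simp only [Matrix.mul_assoc]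
      _ = VXᵀ * (VX * LamX * VXᵀ) * VX := by rw [hspecX]
      _ = LamX := hconjVX
  have hX3e : X3ᵀ * X3 = G * LamX * G := by
    rw [hX3def, Matrix.transpose_mul, hGsym]
    calc G * (LX * VX)ᵀ * ((LX * VX) * G)
        = G * ((LX * VX)ᵀ * (LX * VX)) * G := by simp only [Matrix.mul_assoc]
      _ = G * LamX * G := by rw [hBB]
  set SQ := hLam.sqrt with hSQdef
  have hSQ : SQ * SQ = LamX := hLam.sqrt_mul_self
  have hSQsym : SQᵀ = SQ := by rw [← trans_eq_conj]; exact hLam.posSemidef_sqrt.1.eq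
  have htr4 : (SQᵀ * (G * G) * SQ).trace = (G * LamX * G).trace := by
    calc (SQᵀ * (G * G) * SQ).trace
        = (SQ * ((G * G) * SQ)).trace := by rw [hSQsym, Matrix.mul_assoc]
      _ = (((G * G) * SQ) * SQ).trace := Matrix.trace_mul_comm SQ ((G * G) * SQ)
      _ = ((G * G) * (SQ * SQ)).trace := by rw [Matrix.mul_assoc ((G : Matrix (Fin mX) (Fin mX) ℝ) * G) SQ SQ]
      _ = ((G * G) * LamX).trace := by rw [hSQ]
      _ = (G * LamX * G).trace := (Matrix.trace_mul_cycle G LamX G).symm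
  have hSQtr : (SQᵀ * SQ).trace = LamX.trace := by rw [hSQsym, hSQ]
  have hLamtr : LamX.trace = (LXᵀ * LX).trace := by
    calc LamX.trace = ((VXᵀ * VX) * LamX).trace := by rw [hVX, Matrix.one_mul]
      _ = (VX * LamX * VXᵀ).trace := (Matrix.trace_mul_cycle VX LamX VXᵀ).symm
      _ = (LXᵀ * LX).trace := by rw [hspecX]
  have htrX : (LXᵀ * LX).trace ≤ KX.trace := by
    have h := trace_nonneg' hRX
    rw [hRXdef, Matrix.trace_sub] at h
    have hcomm : (LX * LXᵀ).trace = (LXᵀ * LX).trace := Matrix.trace_mul_comm LX LXᵀ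
    linarith
  have s4 : (X3ᵀ * X3).trace ≤ (c ^ 2)⁻¹ * KX.trace := by
    have h := trace_conj_mono hGsq SQ
    rw [conj_smul_one_trace, hSQtr] at h
    have h2 : (X3ᵀ * X3).trace ≤ (c ^ 2)⁻¹ * LamX.trace := by
      rw [hX3e, ← htr4]; exact h
    have h3 : (c ^ 2)⁻¹ * LamX.trace ≤ (c ^ 2)⁻¹ * KX.trace := by
      apply mul_le_mul_of_nonneg_left _ (inv_nonneg.mpr (sq_nonneg c))
      rw [hLamtr]; exact htrX
    linarith
  -- assemble
  have hc2 : (0:ℝ) ≤ (c ^ 2)⁻¹ := inv_nonneg.mpr (sq_nonneg c)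
  calc (X1ᵀ * (LY * LYᵀ) * X1).trace
      ≤ KY.trace * (X1ᵀ * X1).trace := s1
    _ ≤ KY.trace * ((c ^ 2)⁻¹ * (X2ᵀ * X2).trace) := mul_le_mul_of_nonneg_left s2 hKYtr
    _ ≤ KY.trace * ((c ^ 2)⁻¹ * (ε ^ 2 * (X3ᵀ * X3).trace)) := by
        apply mul_le_mul_of_nonneg_left _ hKYtr
        exact mul_le_mul_of_nonneg_left s3 hc2
    _ ≤ KY.trace * ((c ^ 2)⁻¹ * (ε ^ 2 * ((c ^ 2)⁻¹ * KX.trace))) := by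
        apply mul_le_mul_of_nonneg_left _ hKYtr
        apply mul_le_mul_of_nonneg_left _ hc2
        exact mul_le_mul_of_nonneg_left s4 (sq_nonneg ε)
    _ = ε ^ 2 / c ^ 4 * KX.trace * KY.trace := by
        field_simp
end

section
/- Under the full hypotheses of Theorem 4.1 and Proposition 4.2 combined — K_X, K_Y ∈ ℝ^{n×n} symmetric positive semidefinite with pivoted Cholesky structure (B_Xᵀ L_X = I, K_X B_X = L_X, V_X orthogonal, V_X Λ_X V_Xᵀ = L_Xᵀ L_X, Q_X = B_X V_X; analogously for Y), residuals K_X − L_X L_Xᵀ and K_Y − L_Y L_Yᵀ positive semidefinite of trace at most ε, F = (K_X + nλ I_n)^{-1}, F̃ = (L_Y V_Y)ᵀ(L_X V_X)(Λ_X + nλ I)^{-1}, λ > 0 — the squared RKHS approximation error satisfies trace((F − Q_Y F̃ Q_Xᵀ)ᵀ K_Y (F − Q_Y F̃ Q_Xᵀ) K_X) ≤ ε · ‖F‖_F² · (trace(K_X) + trace(K_Y)) + (ε²/(nλ)⁴) · trace(K_X) · trace(K_Y). -/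
open Matrix
open scoped MatrixOrder
set_option linter.unusedSectionVars false

set_option maxHeartbeats 1000000

section Helpers

variable {n : Type*} [Fintype n] [DecidableEq n]

lemma psd_trace_nonneg_s15 {P : Matrix n n ℝ} (hP : P.PosSemidef) : 0 ≤ P.trace := by
  apply Finset.sum_nonneg
  intro i _
  have := hP.dotProduct_mulVec_nonneg (Pi.single i 1)
  simpa using this

lemma psd_trace_mul_nonneg_s15 {P Q : Matrix n n ℝ} (hP : P.PosSemidef) (hQ : Q.PosSemidef) :
    0 ≤ (P * Q).trace := by
  have hS := (CFC.sqrt_nonneg P).posSemidef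
  have h1 : P * Q = CFC.sqrt P * (CFC.sqrt P * Q) := by
    rw [← mul_assoc, CFC.sqrt_mul_sqrt_self P hP.nonneg]
  rw [h1, trace_mul_comm]
  have h2 : (CFC.sqrt P * Q * CFC.sqrt P).PosSemidef := by
    have := hQ.mul_mul_conjTranspose_same (CFC.sqrt P)
    rwa [hS.isHermitian.eq] at this
  exact psd_trace_nonneg_s15 h2

lemma psd_le_trace_smul_one {P : Matrix n n ℝ} (hP : P.PosSemidef) :
    (P.trace • (1 : Matrix n n ℝ) - P).PosSemidef := by
  set S := CFC.sqrt P with hSdef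
  have hS := (CFC.sqrt_nonneg P).posSemidef
  have hSsym : Sᵀ = S := hS.isHermitian.eq
  have hPS : P = Sᵀ * S := by rw [hSsym, CFC.sqrt_mul_sqrt_self P hP.nonneg]
  refine Matrix.PosSemidef.of_dotProduct_mulVec_nonneg ?_ ?_
  · simp [Matrix.IsHermitian, conjTranspose_sub, conjTranspose_smul, hP.isHermitian.eq]
    simpa using hP.isHermitian.eq
  · intro x
    have hq : star x ⬝ᵥ ((P.trace • (1 : Matrix n n ℝ) - P) *ᵥ x)
        = P.trace * (x ⬝ᵥ x) - (S *ᵥ x) ⬝ᵥ (S *ᵥ x) := by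
      rw [sub_mulVec, dotProduct_sub, smul_mulVec, one_mulVec, dotProduct_smul]
      simp only [star_trivial, smul_eq_mul]
      congr 1
      rw [hPS, ← mulVec_mulVec, dotProduct_mulVec, ← mulVec_transpose, transpose_transpose]
    rw [hq, sub_nonneg]
    have htr : P.trace = ∑ j, ∑ i, S i j ^ 2 := by
      rw [hPS]
      simp [Matrix.trace, Matrix.diag, Matrix.mul_apply, sq]
    have hdot : (S *ᵥ x) ⬝ᵥ (S *ᵥ x) = ∑ i, (∑ j, S i j * x j) ^ 2 := by
      simp [dotProduct, mulVec, sq]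
    rw [hdot, htr]
    have hxx : x ⬝ᵥ x = ∑ j, x j ^ 2 := by simp [dotProduct, sq]
    rw [hxx, Finset.sum_comm (s := Finset.univ) (t := Finset.univ) (f := fun j i => S i j ^ 2),
      Finset.sum_mul]
    refine Finset.sum_le_sum fun i _ => ?_
    exact Finset.sum_mul_sq_le_sq_mul_sq Finset.univ (fun j => S i j) x

lemma trace_mul_mono {P P' Q : Matrix n n ℝ} (h : (P' - P).PosSemidef) (hQ : Q.PosSemidef) :
    (P * Q).trace ≤ (P' * Q).trace := by
  have h0 := psd_trace_mul_nonneg_s15 h hQ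
  rw [Matrix.sub_mul, trace_sub] at h0
  linarith

lemma trace_mul_le_mul {P Q : Matrix n n ℝ} (hP : P.PosSemidef) (hQ : Q.PosSemidef) :
    (P * Q).trace ≤ P.trace * Q.trace := by
  have h := trace_mul_mono (psd_le_trace_smul_one hP) hQ
  rwa [smul_mul_assoc, one_mul, trace_smul, smul_eq_mul] at h

lemma psd_tmul {m : Type*} [Fintype m] (A : Matrix m n ℝ) : (Aᵀ * A).PosSemidef := by
  have := posSemidef_conjTranspose_mul_self A
  rwa [conjTranspose_eq_transpose_of_trivial] at this

lemma psd_self_mul {m : Type*} [Fintype m] (A : Matrix n m ℝ) : (A * Aᵀ).PosSemidef := by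
  have := psd_tmul Aᵀ
  rwa [transpose_transpose] at this

lemma psd_smul {P : Matrix n n ℝ} (hP : P.PosSemidef) {c : ℝ} (hc : 0 ≤ c) :
    (c • P).PosSemidef := by
  refine Matrix.PosSemidef.of_dotProduct_mulVec_nonneg ?_ ?_
  · have h := hP.isHermitian.eq
    rw [Matrix.IsHermitian, conjTranspose_smul, h]
    simp
  · intro x
    rw [smul_mulVec, dotProduct_smul]
    exact mul_nonneg hc (by simpa using hP.dotProduct_mulVec_nonneg x)

lemma psd_sandwich {P A : Matrix n n ℝ} (hP : P.PosSemidef) (hA : Aᵀ = A) :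
    (A * P * A).PosSemidef := by
  have := hP.mul_mul_conjTranspose_same A
  rwa [conjTranspose_eq_transpose_of_trivial, hA] at this

lemma trace_transpose_mul_mul_le {m : Type*} [Fintype m] [DecidableEq m]
    {P : Matrix m m ℝ} {t : ℝ} (h : (t • (1 : Matrix m m ℝ) - P).PosSemidef)
    (A : Matrix m n ℝ) : (Aᵀ * P * A).trace ≤ t * (Aᵀ * A).trace := by
  have h1 : (Aᵀ * P * A).trace = (P * (A * Aᵀ)).trace := by
    rw [Matrix.mul_assoc, trace_mul_comm, Matrix.mul_assoc]
  have h2 : (A * Aᵀ).PosSemidef := psd_self_mul A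
  have h3 := trace_mul_mono h h2
  rw [smul_mul_assoc, one_mul, trace_smul, smul_eq_mul] at h3
  rw [h1]
  calc (P * (A * Aᵀ)).trace ≤ t * (A * Aᵀ).trace := h3
    _ = t * (Aᵀ * A).trace := by rw [trace_mul_comm]

lemma massoc {l m o p : Type*} [Fintype m] [Fintype o]
    {A : Matrix l m ℝ} {B : Matrix m o ℝ} {C : Matrix l o ℝ} (h : A * B = C)
    (X : Matrix o p ℝ) : A * (B * X) = C * X := by rw [← Matrix.mul_assoc, h]

lemma tr4 (A B P Q : Matrix n n ℝ) (hA : Aᵀ = A) (hB : Bᵀ = B) (hP : Pᵀ = P) (hQ : Qᵀ = Q) :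
    (A * (P * (B * Q))).trace = (B * (P * (A * Q))).trace := by
  rw [← trace_transpose (A * (P * (B * Q)))]
  rw [show (A * (P * (B * Q)))ᵀ = Q * (B * (P * A)) from by
    simp only [transpose_mul, hA, hB, hP, hQ, Matrix.mul_assoc]]
  rw [trace_mul_comm]
  simp only [Matrix.mul_assoc]

lemma inv_sq_le_s15 {k : Type*} [Fintype k] [DecidableEq k] {K : Matrix k k ℝ} (hK : K.PosSemidef)
    {c : ℝ} (hc : 0 < c) :
    ((1/c^2) • (1 : Matrix k k ℝ) - (K + c • 1)⁻¹ * (K + c • 1)⁻¹).PosSemidef := by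
  have hKs : Kᵀ = K := by
    have := hK.isHermitian.eq
    rwa [conjTranspose_eq_transpose_of_trivial] at this
  have hone : (c • (1 : Matrix k k ℝ)).PosDef := by
    rw [smul_one_eq_diagonal]; exact Matrix.PosDef.diagonal fun _ => hc
  have hA : (K + c • 1).PosDef := Matrix.PosDef.posSemidef_add hK hone
  set W := (K + c • 1)⁻¹ with hW
  have hdet : IsUnit (K + c • 1).det := hA.det_pos.ne'.isUnit
  have hWr : (K + c • 1) * W = 1 := Matrix.mul_nonsing_inv _ hdet
  have hWl : W * (K + c • 1) = 1 := Matrix.nonsing_inv_mul _ hdet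
  have hWs : Wᵀ = W := by
    rw [hW, Matrix.transpose_nonsing_inv, transpose_add, hKs, transpose_smul, transpose_one]
  have h1 : W * ((K + c • 1) * (K + c • 1)) * W = 1 := by
    rw [show W * ((K + c • 1) * (K + c • 1)) * W = (W * (K + c • 1)) * ((K + c • 1) * W) from by
      simp only [Matrix.mul_assoc], hWl, hWr, Matrix.one_mul]
  have h2 : (K + c • 1) * (K + c • 1)
      = K * K + (2*c) • K + (c^2) • (1 : Matrix k k ℝ) := by
    simp only [mul_add, add_mul, mul_smul_comm, smul_mul_assoc, smul_smul,
      Matrix.mul_one, Matrix.one_mul]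
    module
  have h3 : (1/c^2) • (1 : Matrix k k ℝ) - W * W
      = W * ((1/c^2) • ((K + c • 1) * (K + c • 1)) - 1) * W := by
    rw [Matrix.mul_sub, Matrix.sub_mul, mul_smul_comm, smul_mul_assoc, h1, Matrix.mul_one]
  have h4 : (1/c^2) • ((K + c • 1) * (K + c • 1)) - 1
      = (1/c^2) • (K * K + (2*c) • K) := by
    rw [h2, smul_add, smul_smul]
    have hcc : (1/c^2) * c^2 = 1 := by field_simp
    rw [hcc, one_smul]
    abel
  have h5 : (K * K + (2*c) • K).PosSemidef := by
    have ha : (K * K).PosSemidef := by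
      have := psd_tmul K
      rwa [hKs] at this
    exact ha.add (psd_smul hK (by positivity))
  rw [h3, h4]
  exact psd_sandwich (psd_smul h5 (by positivity)) hWs

end Helpers

/-- Explicit low-rank error bound δ^LR (Equation (22)): combining Theorem 4.1
with Proposition 4.2, with `F = (K_X + nλ I)⁻¹` and
`F̃ = (L_Y V_Y)ᵀ (L_X V_X)(Λ_X + nλ I)⁻¹`,
`‖μ̂ − μ̃‖²_ℋ ≤ ε ‖F‖_F² (trace K_X + trace K_Y) + (ε²/(nλ)⁴) trace(K_X) trace(K_Y)`. -/
theorem delta_LR_bound (n mX mY : ℕ) (ε : ℝ)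
    (KX KY : Matrix (Fin n) (Fin n) ℝ) (hKX : KX.PosSemidef) (hKY : KY.PosSemidef)
    (LX BX : Matrix (Fin n) (Fin mX) ℝ) (hBLX : BXᵀ * LX = 1) (hKBX : KX * BX = LX)
    (VX LamX : Matrix (Fin mX) (Fin mX) ℝ) (hVX : VXᵀ * VX = 1) (hVX' : VX * VXᵀ = 1)
    (hLamX : LamX.IsDiag) (hspecX : VX * LamX * VXᵀ = LXᵀ * LX)
    (LY BY : Matrix (Fin n) (Fin mY) ℝ) (hBLY : BYᵀ * LY = 1) (hKBY : KY * BY = LY)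
    (VY LamY : Matrix (Fin mY) (Fin mY) ℝ) (hVY : VYᵀ * VY = 1) (hVY' : VY * VYᵀ = 1)
    (hLamY : LamY.IsDiag) (hspecY : VY * LamY * VYᵀ = LYᵀ * LY)
    (hRX : (KX - LX * LXᵀ).PosSemidef) (hRY : (KY - LY * LYᵀ).PosSemidef)
    (htX : (KX - LX * LXᵀ).trace ≤ ε) (htY : (KY - LY * LYᵀ).trace ≤ ε)
    (lam : ℝ) (hlam : 0 < lam) :
    let F : Matrix (Fin n) (Fin n) ℝ := (KX + ((n : ℝ) * lam) • 1)⁻¹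
    let Ft : Matrix (Fin mY) (Fin mX) ℝ :=
      (LY * VY)ᵀ * (LX * VX) * (LamX + ((n : ℝ) * lam) • 1)⁻¹
    ((F - (BY * VY) * Ft * (BX * VX)ᵀ)ᵀ * KY *
      (F - (BY * VY) * Ft * (BX * VX)ᵀ) * KX).trace ≤
      ε * (Fᵀ * F).trace * (KX.trace + KY.trace) +
        ε ^ 2 / ((n : ℝ) * lam) ^ 4 * KX.trace * KY.trace := by
  intro F Ft
  have hFdef : F = (KX + ((n : ℝ) * lam) • 1)⁻¹ := rfl
  have hFtdef : Ft = (LY * VY)ᵀ * (LX * VX) * (LamX + ((n : ℝ) * lam) • 1)⁻¹ := rfl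
  rw [hFdef, hFtdef]
  rcases Nat.eq_zero_or_pos n with hn | hn
  · subst hn
    simp [Matrix.trace]
  have hc : (0:ℝ) < (n : ℝ) * lam := mul_pos (by exact_mod_cast hn) hlam
  set c : ℝ := (n : ℝ) * lam with hcdef
  -- basic symmetry facts
  have hKXs : KXᵀ = KX := by
    have := hKX.isHermitian.eq
    rwa [conjTranspose_eq_transpose_of_trivial] at this
  have hKYs : KYᵀ = KY := by
    have := hKY.isHermitian.eq
    rwa [conjTranspose_eq_transpose_of_trivial] at this
  have hLBX : LXᵀ * BX = 1 := by
    have := congrArg Matrix.transpose hBLX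
    simpa [transpose_mul] using this
  have hLBY : LYᵀ * BY = 1 := by
    have := congrArg Matrix.transpose hBLY
    simpa [transpose_mul] using this
  have hBKX : BXᵀ * KX = LXᵀ := by
    have := congrArg Matrix.transpose hKBX
    rwa [transpose_mul, hKXs] at this
  have hBKY : BYᵀ * KY = LYᵀ := by
    have := congrArg Matrix.transpose hKBY
    rwa [transpose_mul, hKYs] at this
  -- abbreviations
  set KtX := LX * LXᵀ with hKtXdef
  set KtY := LY * LYᵀ with hKtYdef
  set RX := KX - KtX with hRXdef
  set RY := KY - KtY with hRYdef
  set J := c • (1 : Matrix (Fin n) (Fin n) ℝ) with hJdef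
  set Fm := (KX + J)⁻¹ with hFmdef
  set Gm := (KtX + J)⁻¹ with hGmdef
  have hKtXs : KtXᵀ = KtX := by rw [hKtXdef, transpose_mul, transpose_transpose]
  have hKtYs : KtYᵀ = KtY := by rw [hKtYdef, transpose_mul, transpose_transpose]
  have hRXs : RXᵀ = RX := by rw [hRXdef, transpose_sub, hKXs, hKtXs]
  have hKtXpsd : KtX.PosSemidef := by rw [hKtXdef]; exact psd_self_mul LX
  have hKtYpsd : KtY.PosSemidef := by rw [hKtYdef]; exact psd_self_mul LY
  -- positive definiteness and inverses
  have honen : (c • (1 : Matrix (Fin n) (Fin n) ℝ)).PosDef := by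
    rw [smul_one_eq_diagonal]; exact Matrix.PosDef.diagonal fun _ => hc
  have hAX : (KX + J).PosDef := by
    rw [hJdef]; exact Matrix.PosDef.posSemidef_add hKX honen
  have hAtX : (KtX + J).PosDef := by
    rw [hJdef]; exact Matrix.PosDef.posSemidef_add hKtXpsd honen
  have hCX : (LXᵀ * LX + c • (1 : Matrix (Fin mX) (Fin mX) ℝ)).PosDef := by
    refine Matrix.PosDef.posSemidef_add (psd_tmul LX) ?_
    rw [smul_one_eq_diagonal]; exact Matrix.PosDef.diagonal fun _ => hc
  have hFr : (KX + J) * Fm = 1 := Matrix.mul_nonsing_inv _ hAX.det_pos.ne'.isUnit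
  have hFl : Fm * (KX + J) = 1 := Matrix.nonsing_inv_mul _ hAX.det_pos.ne'.isUnit
  have hGr : (KtX + J) * Gm = 1 := Matrix.mul_nonsing_inv _ hAtX.det_pos.ne'.isUnit
  have hGl : Gm * (KtX + J) = 1 := Matrix.nonsing_inv_mul _ hAtX.det_pos.ne'.isUnit
  have hCXr : (LXᵀ * LX + c • (1 : Matrix (Fin mX) (Fin mX) ℝ))
      * (LXᵀ * LX + c • (1 : Matrix (Fin mX) (Fin mX) ℝ))⁻¹ = 1 :=
    Matrix.mul_nonsing_inv _ hCX.det_pos.ne'.isUnit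
  have hFms : Fmᵀ = Fm := by
    rw [hFmdef, Matrix.transpose_nonsing_inv, transpose_add, hKXs, hJdef, transpose_smul,
      transpose_one]
  have hGms : Gmᵀ = Gm := by
    rw [hGmdef, Matrix.transpose_nonsing_inv, transpose_add, hKtXs, hJdef, transpose_smul,
      transpose_one]
  -- inverse of LamX + c 1 via CX
  have h2X : VXᵀ * (LXᵀ * LX) * VX = LamX := by
    rw [← hspecX]
    calc VXᵀ * (VX * LamX * VXᵀ) * VX
        = VXᵀ * VX * LamX * (VXᵀ * VX) := by simp only [Matrix.mul_assoc]
      _ = LamX := by rw [hVX, Matrix.one_mul, Matrix.mul_one]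
  have hsc : VXᵀ * (c • (1 : Matrix (Fin mX) (Fin mX) ℝ)) * VX
      = c • (1 : Matrix (Fin mX) (Fin mX) ℝ) := by
    rw [mul_smul_comm, smul_mul_assoc, Matrix.mul_one, hVX]
  have hLamEq : LamX + c • (1 : Matrix (Fin mX) (Fin mX) ℝ)
      = VXᵀ * (LXᵀ * LX + c • 1) * VX := by
    rw [mul_add, add_mul, h2X, hsc]
  have hLamInv : (LamX + c • (1 : Matrix (Fin mX) (Fin mX) ℝ))⁻¹
      = VXᵀ * (LXᵀ * LX + c • 1)⁻¹ * VX := by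
    apply Matrix.inv_eq_right_inv
    rw [hLamEq]
    calc VXᵀ * (LXᵀ * LX + c • 1) * VX * (VXᵀ * (LXᵀ * LX + c • 1)⁻¹ * VX)
        = VXᵀ * ((LXᵀ * LX + c • 1) * (VX * VXᵀ * ((LXᵀ * LX + c • 1)⁻¹ * VX))) := by
          simp only [Matrix.mul_assoc]
      _ = 1 := by
          rw [hVX', Matrix.one_mul, massoc hCXr, Matrix.one_mul, hVX]
  -- push-through
  have hswap : (KtX + J) * LX = LX * (LXᵀ * LX + c • 1) := by
    rw [hKtXdef, hJdef, Matrix.add_mul, Matrix.mul_add, Matrix.smul_mul, Matrix.mul_smul,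
      Matrix.one_mul, Matrix.mul_one, Matrix.mul_assoc]
  have hPush : LX * (LXᵀ * LX + c • 1)⁻¹ = Gm * LX := by
    have h1 : (KtX + J) * (LX * (LXᵀ * LX + c • 1)⁻¹) = LX := by
      rw [← Matrix.mul_assoc, hswap, Matrix.mul_assoc, hCXr, Matrix.mul_one]
    calc LX * (LXᵀ * LX + c • 1)⁻¹
        = Gm * ((KtX + J) * (LX * (LXᵀ * LX + c • 1)⁻¹)) := by
          rw [← Matrix.mul_assoc, hGl, Matrix.one_mul]
      _ = Gm * LX := by rw [h1]
  -- the low-rank matrix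
  have hM : (BY * VY) * ((LY * VY)ᵀ * (LX * VX) * (LamX + c • 1)⁻¹) * (BX * VX)ᵀ
      = BY * LYᵀ * Gm * LX * BXᵀ := by
    rw [hLamInv, transpose_mul, transpose_mul]
    calc (BY * VY) * (VYᵀ * LYᵀ * (LX * VX) * (VXᵀ * (LXᵀ * LX + c • 1)⁻¹ * VX))
          * (VXᵀ * BXᵀ)
        = BY * (VY * VYᵀ * (LYᵀ * (LX * (VX * VXᵀ
            * ((LXᵀ * LX + c • 1)⁻¹ * (VX * VXᵀ * BXᵀ)))))) := by
          simp only [Matrix.mul_assoc]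
      _ = BY * (LYᵀ * (LX * ((LXᵀ * LX + c • 1)⁻¹ * BXᵀ))) := by
          rw [hVY', hVX']
          simp only [Matrix.one_mul]
      _ = BY * LYᵀ * Gm * LX * BXᵀ := by
          rw [massoc hPush]
          simp only [Matrix.mul_assoc]
  rw [hM]
  set M0 := BY * LYᵀ * Gm * LX * BXᵀ with hM0def
  have hM0t : M0ᵀ = BX * (LXᵀ * (Gm * (LY * BYᵀ))) := by
    rw [hM0def]
    simp only [transpose_mul, transpose_transpose, hGms, Matrix.mul_assoc]
  have q1m : (Fm - M0)ᵀ * KY * (Fm - M0) * KX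
      = Fm * KY * Fm * KX - Fm * KY * M0 * KX - M0ᵀ * KY * Fm * KX + M0ᵀ * KY * M0 * KX := by
    rw [transpose_sub, hFms]
    noncomm_ring
  have q2m : Fm * KY * M0 * KX = Fm * KtY * Gm * KtX := by
    rw [hM0def, hKtYdef, hKtXdef]
    simp only [Matrix.mul_assoc]
    rw [massoc hKBY, hBKX]
  have q3 : (M0ᵀ * KY * Fm * KX).trace = (Fm * KtY * Gm * KtX).trace := by
    rw [hM0t]
    rw [show BX * (LXᵀ * (Gm * (LY * BYᵀ))) * KY * Fm * KX
        = BX * (LXᵀ * (Gm * (LY * (BYᵀ * (KY * (Fm * KX)))))) from by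
      simp only [Matrix.mul_assoc]]
    rw [massoc hBKY, trace_mul_comm]
    rw [show LXᵀ * (Gm * (LY * (LYᵀ * (Fm * KX)))) * BX
        = LXᵀ * (Gm * (LY * (LYᵀ * (Fm * (KX * BX))))) from by simp only [Matrix.mul_assoc]]
    rw [hKBX, trace_mul_comm]
    rw [show Gm * (LY * (LYᵀ * (Fm * LX))) * LXᵀ = Gm * (LY * LYᵀ * (Fm * (LX * LXᵀ))) from by
      simp only [Matrix.mul_assoc]]
    rw [← hKtYdef, ← hKtXdef, tr4 Gm Fm KtY KtX hGms hFms hKtYs hKtXs]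
    simp only [Matrix.mul_assoc]
  have q4 : (M0ᵀ * KY * M0 * KX).trace = (Gm * KtY * Gm * KtX).trace := by
    rw [hM0t, hM0def]
    rw [show BX * (LXᵀ * (Gm * (LY * BYᵀ))) * KY * (BY * LYᵀ * Gm * LX * BXᵀ) * KX
        = BX * (LXᵀ * (Gm * (LY * (BYᵀ * (KY * (BY * (LYᵀ * (Gm * (LX * (BXᵀ * KX))))))))))
          from by simp only [Matrix.mul_assoc]]
    rw [hBKX, massoc hKBY, massoc hBLY, Matrix.one_mul, trace_mul_comm]
    rw [show LXᵀ * (Gm * (LY * (LYᵀ * (Gm * (LX * LXᵀ))))) * BX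
        = LXᵀ * (Gm * (LY * (LYᵀ * (Gm * (LX * (LXᵀ * BX)))))) from by
      simp only [Matrix.mul_assoc]]
    rw [hLBX, Matrix.mul_one, trace_mul_comm]
    rw [show Gm * (LY * (LYᵀ * (Gm * LX))) * LXᵀ = Gm * (LY * LYᵀ * (Gm * (LX * LXᵀ))) from by
      simp only [Matrix.mul_assoc]]
    rw [← hKtYdef, ← hKtXdef]
    simp only [Matrix.mul_assoc]
  have q5 : Fm * KY * Fm * KX
      = Fm * KtY * Fm * KtX + Fm * KtY * Fm * RX + Fm * RY * Fm * KX := by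
    rw [hRXdef, hRYdef]
    noncomm_ring
  have q6m : (Fm - Gm) * KtY * (Fm - Gm) * KtX
      = Fm * KtY * Fm * KtX - Fm * KtY * Gm * KtX - Gm * KtY * Fm * KtX
        + Gm * KtY * Gm * KtX := by
    noncomm_ring
  have q6s : (Gm * KtY * Fm * KtX).trace = (Fm * KtY * Gm * KtX).trace := by
    rw [show Gm * KtY * Fm * KtX = Gm * (KtY * (Fm * KtX)) from by simp only [Matrix.mul_assoc],
      tr4 Gm Fm KtY KtX hGms hFms hKtYs hKtXs]
    simp only [Matrix.mul_assoc]
  have hsum : ((Fm - M0)ᵀ * KY * (Fm - M0) * KX).trace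
      = (Fm * RY * Fm * KX).trace + (Fm * KtY * Fm * RX).trace
        + ((Fm - Gm) * KtY * (Fm - Gm) * KtX).trace := by
    have e1 := congrArg Matrix.trace q1m
    have e2 := congrArg Matrix.trace q2m
    have e5 := congrArg Matrix.trace q5
    have e6 := congrArg Matrix.trace q6m
    simp only [trace_add, trace_sub] at e1 e2 e5 e6
    linarith [q3, q4, q6s]
  rw [hsum, hFms]
  -- nonnegativity facts
  have heps : 0 ≤ ε := le_trans (psd_trace_nonneg_s15 hRX) htX
  have hFF : (Fm * Fm).PosSemidef := by
    have := psd_tmul Fm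
    rwa [hFms] at this
  have htrFF : 0 ≤ (Fm * Fm).trace := psd_trace_nonneg_s15 hFF
  have htrKX : 0 ≤ KX.trace := psd_trace_nonneg_s15 hKX
  have htrKY : 0 ≤ KY.trace := psd_trace_nonneg_s15 hKY
  have htrKtX : 0 ≤ KtX.trace := psd_trace_nonneg_s15 hKtXpsd
  have htrKtY : 0 ≤ KtY.trace := psd_trace_nonneg_s15 hKtYpsd
  have htrRX : 0 ≤ RX.trace := psd_trace_nonneg_s15 hRX
  have htrRY : 0 ≤ RY.trace := psd_trace_nonneg_s15 hRY
  have htrKtXle : KtX.trace ≤ KX.trace := by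
    have : RX.trace = KX.trace - KtX.trace := by rw [hRXdef, trace_sub]
    linarith
  have htrKtYle : KtY.trace ≤ KY.trace := by
    have : RY.trace = KY.trace - KtY.trace := by rw [hRYdef, trace_sub]
    linarith
  -- bound 1
  have hQ1 : (Fm * KX * Fm).PosSemidef := psd_sandwich hKX hFms
  have b1 : (Fm * RY * Fm * KX).trace ≤ ε * (KX.trace * (Fm * Fm).trace) := by
    have s1 : (Fm * RY * Fm * KX).trace = (RY * (Fm * KX * Fm)).trace := by
      rw [show Fm * RY * Fm * KX = Fm * (RY * (Fm * KX)) from by simp only [Matrix.mul_assoc],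
        trace_mul_comm,
        show RY * (Fm * KX) * Fm = RY * (Fm * KX * Fm) from by simp only [Matrix.mul_assoc]]
    have s3 : (Fm * KX * Fm).trace = (KX * (Fm * Fm)).trace := by
      rw [Matrix.mul_assoc, trace_mul_comm, Matrix.mul_assoc]
    calc (Fm * RY * Fm * KX).trace = (RY * (Fm * KX * Fm)).trace := s1
      _ ≤ RY.trace * (Fm * KX * Fm).trace := trace_mul_le_mul hRY hQ1
      _ ≤ RY.trace * (KX.trace * (Fm * Fm).trace) := by
          refine mul_le_mul_of_nonneg_left ?_ htrRY
          rw [s3]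
          exact trace_mul_le_mul hKX hFF
      _ ≤ ε * (KX.trace * (Fm * Fm).trace) :=
          mul_le_mul_of_nonneg_right htY (mul_nonneg htrKX htrFF)
  -- bound 2
  have hQ2 : (Fm * KtY * Fm).PosSemidef := psd_sandwich hKtYpsd hFms
  have b2 : (Fm * KtY * Fm * RX).trace ≤ ε * (KY.trace * (Fm * Fm).trace) := by
    have s1 : (Fm * KtY * Fm * RX).trace = (RX * (Fm * KtY * Fm)).trace := trace_mul_comm _ _
    have s3 : (Fm * KtY * Fm).trace = (KtY * (Fm * Fm)).trace := by
      rw [Matrix.mul_assoc, trace_mul_comm, Matrix.mul_assoc]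
    calc (Fm * KtY * Fm * RX).trace = (RX * (Fm * KtY * Fm)).trace := s1
      _ ≤ RX.trace * (Fm * KtY * Fm).trace := trace_mul_le_mul hRX hQ2
      _ ≤ RX.trace * (KY.trace * (Fm * Fm).trace) := by
          refine mul_le_mul_of_nonneg_left ?_ htrRX
          rw [s3]
          calc (KtY * (Fm * Fm)).trace ≤ KtY.trace * (Fm * Fm).trace :=
                trace_mul_le_mul hKtYpsd hFF
            _ ≤ KY.trace * (Fm * Fm).trace := mul_le_mul_of_nonneg_right htrKtYle htrFF
      _ ≤ ε * (KY.trace * (Fm * Fm).trace) :=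
          mul_le_mul_of_nonneg_right htX (mul_nonneg htrKY htrFF)
  -- bound 3
  have hDs : (Fm - Gm)ᵀ = Fm - Gm := by rw [transpose_sub, hFms, hGms]
  have hDD : ((Fm - Gm) * (Fm - Gm)).PosSemidef := by
    have := psd_tmul (Fm - Gm)
    rwa [hDs] at this
  have hF2 : ((1/c^2) • (1 : Matrix (Fin n) (Fin n) ℝ) - Fm * Fm).PosSemidef := by
    rw [hFmdef, hJdef]
    exact inv_sq_le_s15 hKX hc
  have hG2 : ((1/c^2) • (1 : Matrix (Fin n) (Fin n) ℝ) - Gm * Gm).PosSemidef := by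
    rw [hGmdef, hJdef]
    exact inv_sq_le_s15 hKtXpsd hc
  have hcpos : (0:ℝ) < 1/c^2 := by positivity
  have u5 : ((Fm - Gm) * (Fm - Gm)).trace ≤ 1/c^2 * (1/c^2 * (ε * ε)) := by
    have hDH : Fm - Gm = -(Fm * RX * Gm) := by
      have h1 : Fm * ((KtX + J) * Gm) = Fm := by rw [hGr, Matrix.mul_one]
      have h2 : Fm * (KX + J) * Gm = Gm := by rw [hFl, Matrix.one_mul]
      calc Fm - Gm = Fm * ((KtX + J) * Gm) - Fm * (KX + J) * Gm := by rw [h1, h2]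
        _ = -(Fm * (KX - KtX) * Gm) := by noncomm_ring
        _ = -(Fm * RX * Gm) := by rw [hRXdef]
    have hHs : (Fm * RX * Gm)ᵀ = Fm * RX * Gm := by
      have h := hDs
      rw [hDH, transpose_neg, neg_inj] at h
      exact h
    have hDDeq : (Fm - Gm) * (Fm - Gm) = (Fm * RX * Gm)ᵀ * (Fm * RX * Gm) := by
      rw [hHs, hDH]
      noncomm_ring
    have hH1 : (Fm * RX * Gm)ᵀ * (Fm * RX * Gm) = (RX * Gm)ᵀ * (Fm * Fm) * (RX * Gm) := by
      simp only [transpose_mul, hFms, hGms, hRXs, Matrix.mul_assoc]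
    have w1 : ((RX * Gm)ᵀ * (Fm * Fm) * (RX * Gm)).trace
        ≤ (1/c^2) * ((RX * Gm)ᵀ * (RX * Gm)).trace :=
      trace_transpose_mul_mul_le hF2 (RX * Gm)
    have w2t : ((RX * Gm)ᵀ * (RX * Gm)).trace = (RXᵀ * (Gm * Gm) * RX).trace := by
      rw [trace_mul_comm]
      congr 1
      simp only [transpose_mul, transpose_transpose, hGms, hRXs, Matrix.mul_assoc]
    have w3 : (RXᵀ * (Gm * Gm) * RX).trace ≤ (1/c^2) * (RXᵀ * RX).trace :=
      trace_transpose_mul_mul_le hG2 RX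
    have w4 : (RXᵀ * RX).trace ≤ ε * ε := by
      rw [hRXs]
      have h1 := trace_mul_le_mul hRX hRX
      nlinarith
    calc ((Fm - Gm) * (Fm - Gm)).trace
        = ((RX * Gm)ᵀ * (Fm * Fm) * (RX * Gm)).trace := by rw [hDDeq, hH1]
      _ ≤ (1/c^2) * ((RX * Gm)ᵀ * (RX * Gm)).trace := w1
      _ = (1/c^2) * (RXᵀ * (Gm * Gm) * RX).trace := by rw [w2t]
      _ ≤ (1/c^2) * ((1/c^2) * (RXᵀ * RX).trace) :=
          mul_le_mul_of_nonneg_left w3 hcpos.le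
      _ ≤ 1/c^2 * (1/c^2 * (ε * ε)) :=
          mul_le_mul_of_nonneg_left (mul_le_mul_of_nonneg_left w4 hcpos.le) hcpos.le
  have htrDD : 0 ≤ ((Fm - Gm) * (Fm - Gm)).trace := psd_trace_nonneg_s15 hDD
  have hQ3 : ((Fm - Gm) * KtX * (Fm - Gm)).PosSemidef := psd_sandwich hKtXpsd hDs
  have b3 : ((Fm - Gm) * KtY * (Fm - Gm) * KtX).trace
      ≤ ε^2 / c^4 * KX.trace * KY.trace := by
    have u1 : ((Fm - Gm) * KtY * (Fm - Gm) * KtX).trace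
        = (KtY * ((Fm - Gm) * KtX * (Fm - Gm))).trace := by
      rw [show (Fm - Gm) * KtY * (Fm - Gm) * KtX = (Fm - Gm) * (KtY * ((Fm - Gm) * KtX)) from by
        simp only [Matrix.mul_assoc], trace_mul_comm,
        show KtY * ((Fm - Gm) * KtX) * (Fm - Gm) = KtY * ((Fm - Gm) * KtX * (Fm - Gm)) from by
        simp only [Matrix.mul_assoc]]
    have u3 : ((Fm - Gm) * KtX * (Fm - Gm)).trace = (KtX * ((Fm - Gm) * (Fm - Gm))).trace := by
      rw [Matrix.mul_assoc, trace_mul_comm, Matrix.mul_assoc]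
    have B3 : (0:ℝ) ≤ 1/c^2 * (1/c^2 * (ε * ε)) := by positivity
    calc ((Fm - Gm) * KtY * (Fm - Gm) * KtX).trace
        = (KtY * ((Fm - Gm) * KtX * (Fm - Gm))).trace := u1
      _ ≤ KtY.trace * ((Fm - Gm) * KtX * (Fm - Gm)).trace := trace_mul_le_mul hKtYpsd hQ3
      _ ≤ KtY.trace * (KX.trace * (1/c^2 * (1/c^2 * (ε * ε)))) := by
          refine mul_le_mul_of_nonneg_left ?_ htrKtY
          rw [u3]
          calc (KtX * ((Fm - Gm) * (Fm - Gm))).trace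
              ≤ KtX.trace * ((Fm - Gm) * (Fm - Gm)).trace := trace_mul_le_mul hKtXpsd hDD
            _ ≤ KX.trace * ((Fm - Gm) * (Fm - Gm)).trace :=
                mul_le_mul_of_nonneg_right htrKtXle htrDD
            _ ≤ KX.trace * (1/c^2 * (1/c^2 * (ε * ε))) :=
                mul_le_mul_of_nonneg_left u5 htrKX
      _ ≤ KY.trace * (KX.trace * (1/c^2 * (1/c^2 * (ε * ε)))) :=
          mul_le_mul_of_nonneg_right htrKtYle (mul_nonneg htrKX B3)
      _ = ε^2 / c^4 * KX.trace * KY.trace := by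
          field_simp
  calc (Fm * RY * Fm * KX).trace + (Fm * KtY * Fm * RX).trace
        + ((Fm - Gm) * KtY * (Fm - Gm) * KtX).trace
      ≤ ε * (KX.trace * (Fm * Fm).trace) + ε * (KY.trace * (Fm * Fm).trace)
        + ε^2 / c^4 * KX.trace * KY.trace := by
        exact add_le_add (add_le_add b1 b2) b3
    _ = ε * (Fm * Fm).trace * (KX.trace + KY.trace) + ε^2 / c^4 * KX.trace * KY.trace := by
        ring
end

section
/- Let (Ω, 𝔽, ℚ) be a probability space, S_0, …, S_{n_T} a sequence of random variables generating the filtration ℱ_k = σ(S_0,…,S_k), and P_0, …, P_{n_T} square-integrable payoffs with P_k ℱ_k-measurable. Define the exact stopping times backward by τ_{n_T} = n_T and τ_k = k if P_k ≥ 𝔼[P_{τ_{k+1}} | ℱ_k], else τ_k = τ_{k+1}; and, given measurable approximate continuation functions producing ℱ_k-measurable square-integrable random variables C̃_k, define approximate stopping times τ̃_{n_T} = n_T and τ̃_k = k if P_k ≥ C̃_k, else τ̃_k = τ̃_{k+1}. Then for each k = 0, …, n_T − 1, ‖C̃_k − 𝔼[P_{τ_{k+1}} | ℱ_k]‖_{L²}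 ≤ 2 · Σ_{j=k}^{n_T−1} ‖C̃_j − 𝔼[P_{τ̃_{j+1}} | ℱ_j]‖_{L²}, where ‖·‖_{L²} is the L²(ℚ) norm. -/
open MeasureTheory

/-- Elementary case analysis used in the backward error propagation. -/
private lemma bep_abs_ineq (a A B C : ℝ) :
    |(if A ≤ a then a else A) - (if C ≤ a then a else B)| ≤ |C - B| + |A - B| := by
  have h1 := le_abs_self (C - B)
  have h2 := neg_abs_le (C - B)
  have h3 := le_abs_self (A - B)
  have h4 := neg_abs_le (A - B)
  have h5 := abs_nonneg (C - B)
  have h6 := abs_nonneg (A - B)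
  split_ifs with hA hC hC <;> rw [abs_le] <;> constructor <;> linarith

/-- The conditional expectation of an `L²` function is in `L²` with no larger norm
(it agrees a.e. with the `L²` orthogonal projection `condExpL2`). -/
private lemma bep_condExp_L2 {α : Type*} {m m0 : MeasurableSpace α} (hm : m ≤ m0)
    {μ : Measure α} [IsFiniteMeasure μ] {f : α → ℝ} (hf : MemLp f 2 μ) :
    MemLp (μ[f|m]) 2 μ ∧ eLpNorm (μ[f|m]) 2 μ ≤ eLpNorm f 2 μ := by
  have hL2 : μ[f|m] =ᵐ[μ] (condExpL2 ℝ ℝ hm (hf.toLp f) : α → ℝ) := by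
    refine (ae_eq_condExp_of_forall_setIntegral_eq hm (hf.integrable one_le_two)
      (fun s _ hμs => integrableOn_condExpL2_of_measure_ne_top hm hμs.ne _)
      (fun s hs hμs => ?_) (aestronglyMeasurable_condExpL2 hm _)).symm
    rw [integral_condExpL2_eq hm (hf.toLp f) hs hμs.ne]
    exact integral_congr_ae (ae_restrict_of_ae hf.coeFn_toLp)
  have hmem : MemLp ((condExpL2 ℝ ℝ hm (hf.toLp f) : α →₂[μ] ℝ) : α → ℝ) 2 μ :=
    Lp.memLp _
  refine ⟨hmem.ae_eq hL2.symm, ?_⟩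
  rw [eLpNorm_congr_ae hL2]
  calc eLpNorm ((condExpL2 ℝ ℝ hm (hf.toLp f) : α →₂[μ] ℝ) : α → ℝ) 2 μ
      ≤ eLpNorm (hf.toLp f) 2 μ := eLpNorm_condExpL2_le hm _
    _ = eLpNorm f 2 μ := eLpNorm_congr_ae hf.coeFn_toLp

/-- Proposition 5.1 (Zanger, Lemma 2.2): local backward error propagation. With
exact stopping times `τ` defined via the true conditional expectations and
approximate stopping times `τ̃` defined via approximate continuation values
`C̃_k`, for each `k < n_T`,
`‖C̃_k − 𝔼[P_{τ_{k+1}} | ℱ_k]‖_{L²} ≤ 2 ∑_{j=k}^{n_T−1} ‖C̃_j − 𝔼[P_{τ̃_{j+1}} | ℱ_j]‖_{L²}`. -/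
theorem backward_error_propagation
    {Ω : Type*} [m0 : MeasurableSpace Ω] (μ : Measure Ω) [IsProbabilityMeasure μ]
    (nT : ℕ) (S : ℕ → Ω → ℝ) (hS : ∀ k, Measurable (S k))
    (ℱ : ℕ → MeasurableSpace Ω)
    (hℱgen : ∀ k, ℱ k = ⨆ i ∈ Set.Iic k, MeasurableSpace.comap (S i) inferInstance)
    (hℱle : ∀ k, ℱ k ≤ m0)
    (P : ℕ → Ω → ℝ)
    (hPmeas : ∀ k, StronglyMeasurable[ℱ k] (P k))
    (hPL2 : ∀ k, MemLp (P k) 2 μ)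
    (τ : ℕ → Ω → ℕ)
    (hτtop : ∀ ω, τ nT ω = nT)
    (hτ : ∀ k < nT, ∀ ω : Ω,
      τ k ω = if (μ[fun ω' => P (τ (k + 1) ω') ω'|ℱ k]) ω ≤ P k ω then k else τ (k + 1) ω)
    (Ctil : ℕ → Ω → ℝ)
    (hCmeas : ∀ k, StronglyMeasurable[ℱ k] (Ctil k))
    (hCL2 : ∀ k, MemLp (Ctil k) 2 μ)
    (τtil : ℕ → Ω → ℕ)
    (hτtiltop : ∀ ω, τtil nT ω = nT)
    (hτtil : ∀ k < nT, ∀ ω : Ω,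
      τtil k ω = if Ctil k ω ≤ P k ω then k else τtil (k + 1) ω) :
    ∀ k < nT,
      eLpNorm (Ctil k - μ[fun ω => P (τ (k + 1) ω) ω|ℱ k]) 2 μ ≤
        2 * ∑ j ∈ Finset.Ico k nT,
          eLpNorm (Ctil j - μ[fun ω => P (τtil (j + 1) ω) ω|ℱ j]) 2 μ := by
  classical
  intro k hk
  set g : ℕ → Ω → ℝ := fun j ω => P (τ j ω) ω with hgdef
  set gt : ℕ → Ω → ℝ := fun j ω => P (τtil j ω) ω with hgtdef
  -- monotonicity of the filtration
  have hmono : ∀ j : ℕ, ℱ j ≤ ℱ (j + 1) := by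
    intro j
    rw [hℱgen j, hℱgen (j + 1)]
    exact biSup_mono fun i hi => le_trans hi (Nat.le_succ j)
  -- ranges and measurability of the stopping times
  have hfacts : ∀ m : ℕ, ∀ j : ℕ, j + m = nT →
      (∀ ω, τ j ω ≤ nT) ∧ (∀ ω, τtil j ω ≤ nT) ∧ Measurable (τ j) ∧ Measurable (τtil j) := by
    intro m
    induction m with
    | zero =>
      intro j hj
      have hj' : j = nT := by omega
      subst hj'
      have h1 : τ j = fun _ => j := funext hτtop
      have h2 : τtil j = fun _ => j := funext hτtiltop
      exact ⟨fun ω => (hτtop ω).le, fun ω => (hτtiltop ω).le,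
        h1 ▸ measurable_const, h2 ▸ measurable_const⟩
    | succ m ih =>
      intro j hj
      have hjlt : j < nT := by omega
      obtain ⟨hr, hrt, hm1, hm2⟩ := ih (j + 1) (by omega)
      have heq : τ j = fun ω =>
          if (μ[fun ω' => P (τ (j + 1) ω') ω'|ℱ j]) ω ≤ P j ω then j else τ (j + 1) ω :=
        funext (hτ j hjlt)
      have heqt : τtil j = fun ω =>
          if Ctil j ω ≤ P j ω then j else τtil (j + 1) ω :=
        funext (hτtil j hjlt)
      have hset : MeasurableSet {ω | (μ[fun ω' => P (τ (j + 1) ω') ω'|ℱ j]) ω ≤ P j ω} :=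
        hℱle j _ (measurableSet_le stronglyMeasurable_condExp.measurable (hPmeas j).measurable)
      have hsett : MeasurableSet {ω | Ctil j ω ≤ P j ω} :=
        hℱle j _ (measurableSet_le (hCmeas j).measurable (hPmeas j).measurable)
      refine ⟨?_, ?_, ?_, ?_⟩
      · intro ω; rw [heq]; dsimp only; split_ifs; exacts [hjlt.le, hr ω]
      · intro ω; rw [heqt]; dsimp only; split_ifs; exacts [hjlt.le, hrt ω]
      · rw [heq]; exact Measurable.ite hset measurable_const hm1
      · rw [heqt]; exact Measurable.ite hsett measurable_const hm2
  have hfacts' : ∀ j ≤ nT,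
      (∀ ω, τ j ω ≤ nT) ∧ (∀ ω, τtil j ω ≤ nT) ∧ Measurable (τ j) ∧ Measurable (τtil j) :=
    fun j hj => hfacts (nT - j) j (by omega)
  -- square integrability of the stopped payoffs
  have hstopL2 : ∀ (σ : ℕ → Ω → ℕ), (∀ ω, σ k ω ≤ nT) → Measurable (σ k) →
      MemLp (fun ω => P (σ k ω) ω) 2 μ := by
    intro σ hr hm
    have hrep : (fun ω => P (σ k ω) ω) =
        fun ω => ∑ i ∈ Finset.range (nT + 1), Set.indicator {ω' | σ k ω' = i} (P i) ω := by
      funext ω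
      simp only [Set.indicator_apply, Set.mem_setOf_eq]
      rw [Finset.sum_ite_eq]
      exact (if_pos (Finset.mem_range.mpr (Nat.lt_succ_of_le (hr ω)))).symm
    rw [hrep]
    refine memLp_finsetSum _ fun i _ => (hPL2 i).indicator ?_
    exact hm (measurableSet_singleton i)
  have hgL2 : ∀ j ≤ nT, MemLp (g j) 2 μ := by
    intro j hj
    exact hstopL2 (fun _ => τ j) (hfacts' j hj).1 (hfacts' j hj).2.2.1
  have hgtL2 : ∀ j ≤ nT, MemLp (gt j) 2 μ := by
    intro j hj
    exact hstopL2 (fun _ => τtil j) (hfacts' j hj).2.1 (hfacts' j hj).2.2.2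
  have hgInt : ∀ j ≤ nT, Integrable (g j) μ := fun j hj => (hgL2 j hj).integrable one_le_two
  have hgtInt : ∀ j ≤ nT, Integrable (gt j) μ := fun j hj => (hgtL2 j hj).integrable one_le_two
  -- conditional expectation of the exactly-stopped payoff
  have hcondg : ∀ j < nT, μ[g j|ℱ j] =ᵐ[μ]
      fun ω => if (μ[g (j + 1)|ℱ j]) ω ≤ P j ω then P j ω
        else (μ[g (j + 1)|ℱ j]) ω := by
    intro j hj
    set A : Ω → ℝ := μ[g (j + 1)|ℱ j] with hAdef
    have hAsm : StronglyMeasurable[ℱ j] A := stronglyMeasurable_condExp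
    set G : Set Ω := {ω | A ω ≤ P j ω} with hGdef
    have hG : MeasurableSet[ℱ j] G :=
      measurableSet_le hAsm.measurable (hPmeas j).measurable
    have hInt1 : Integrable (g (j + 1)) μ := hgInt (j + 1) hj
    have hsplit : g j = G.indicator (P j) + Gᶜ.indicator (g (j + 1)) := by
      funext ω
      have hstep : τ j ω = if A ω ≤ P j ω then j else τ (j + 1) ω := hτ j hj ω
      by_cases h : A ω ≤ P j ω
      · have hmem : ω ∈ G := h
        have hnmem : ω ∉ Gᶜ := fun hc => hc hmem
        show P (τ j ω) ω = _
        rw [Pi.add_apply, Set.indicator_of_mem hmem, Set.indicator_of_notMem hnmem,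
          hstep, if_pos h, add_zero]
      · have hnmem : ω ∉ G := h
        have hmem : ω ∈ Gᶜ := h
        show P (τ j ω) ω = _
        rw [Pi.add_apply, Set.indicator_of_notMem hnmem, Set.indicator_of_mem hmem,
          hstep, if_neg h, zero_add]
    have h1 : Integrable (G.indicator (P j)) μ :=
      ((hPL2 j).integrable one_le_two).indicator (hℱle j _ hG)
    have h2 : Integrable (Gᶜ.indicator (g (j + 1))) μ := hInt1.indicator (hℱle j _ hG.compl)
    calc μ[g j|ℱ j] =ᵐ[μ] μ[G.indicator (P j)|ℱ j] + μ[Gᶜ.indicator (g (j + 1))|ℱ j] := by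
          rw [hsplit]; exact condExp_add h1 h2 (ℱ j)
      _ =ᵐ[μ] fun ω => if A ω ≤ P j ω then P j ω else A ω := by
          have e1 : μ[G.indicator (P j)|ℱ j] = G.indicator (P j) :=
            condExp_of_stronglyMeasurable (hℱle j) ((hPmeas j).indicator hG) h1
          have e2 : μ[Gᶜ.indicator (g (j + 1))|ℱ j] =ᵐ[μ] Gᶜ.indicator A :=
            condExp_indicator hInt1 hG.compl
          filter_upwards [e2] with ω h2'
          rw [Pi.add_apply, e1, h2']
          by_cases h : A ω ≤ P j ω
          · have hmem : ω ∈ G := h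
            have hnmem : ω ∉ Gᶜ := fun hc => hc hmem
            rw [Set.indicator_of_mem hmem, Set.indicator_of_notMem hnmem, if_pos h, add_zero]
          · have hnmem : ω ∉ G := h
            have hmem : ω ∈ Gᶜ := h
            rw [Set.indicator_of_notMem hnmem, Set.indicator_of_mem hmem, if_neg h, zero_add]
  -- conditional expectation of the approximately-stopped payoff
  have hcondgt : ∀ j < nT, μ[gt j|ℱ j] =ᵐ[μ]
      fun ω => if Ctil j ω ≤ P j ω then P j ω else (μ[gt (j + 1)|ℱ j]) ω := by
    intro j hj
    set B : Ω → ℝ := μ[gt (j + 1)|ℱ j] with hBdef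
    set H : Set Ω := {ω | Ctil j ω ≤ P j ω} with hHdef
    have hH : MeasurableSet[ℱ j] H :=
      measurableSet_le (hCmeas j).measurable (hPmeas j).measurable
    have hInt1 : Integrable (gt (j + 1)) μ := hgtInt (j + 1) hj
    have hsplit : gt j = H.indicator (P j) + Hᶜ.indicator (gt (j + 1)) := by
      funext ω
      have hstep : τtil j ω = if Ctil j ω ≤ P j ω then j else τtil (j + 1) ω := hτtil j hj ω
      by_cases h : Ctil j ω ≤ P j ω
      · have hmem : ω ∈ H := h
        have hnmem : ω ∉ Hᶜ := fun hc => hc hmem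
        show P (τtil j ω) ω = _
        rw [Pi.add_apply, Set.indicator_of_mem hmem, Set.indicator_of_notMem hnmem,
          hstep, if_pos h, add_zero]
      · have hnmem : ω ∉ H := h
        have hmem : ω ∈ Hᶜ := h
        show P (τtil j ω) ω = _
        rw [Pi.add_apply, Set.indicator_of_notMem hnmem, Set.indicator_of_mem hmem,
          hstep, if_neg h, zero_add]
    have h1 : Integrable (H.indicator (P j)) μ :=
      ((hPL2 j).integrable one_le_two).indicator (hℱle j _ hH)
    have h2 : Integrable (Hᶜ.indicator (gt (j + 1))) μ := hInt1.indicator (hℱle j _ hH.compl)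
    calc μ[gt j|ℱ j] =ᵐ[μ] μ[H.indicator (P j)|ℱ j] + μ[Hᶜ.indicator (gt (j + 1))|ℱ j] := by
          rw [hsplit]; exact condExp_add h1 h2 (ℱ j)
      _ =ᵐ[μ] fun ω => if Ctil j ω ≤ P j ω then P j ω else B ω := by
          have e1 : μ[H.indicator (P j)|ℱ j] = H.indicator (P j) :=
            condExp_of_stronglyMeasurable (hℱle j) ((hPmeas j).indicator hH) h1
          have e2 : μ[Hᶜ.indicator (gt (j + 1))|ℱ j] =ᵐ[μ] Hᶜ.indicator B :=
            condExp_indicator hInt1 hH.compl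
          filter_upwards [e2] with ω h2'
          rw [Pi.add_apply, e1, h2']
          by_cases h : Ctil j ω ≤ P j ω
          · have hmem : ω ∈ H := h
            have hnmem : ω ∉ Hᶜ := fun hc => hc hmem
            rw [Set.indicator_of_mem hmem, Set.indicator_of_notMem hnmem, if_pos h, add_zero]
          · have hnmem : ω ∉ H := h
            have hmem : ω ∈ Hᶜ := h
            rw [Set.indicator_of_notMem hnmem, Set.indicator_of_mem hmem, if_neg h, zero_add]
  -- error sequence
  set e : ℕ → ENNReal := fun j => eLpNorm (Ctil j - μ[gt (j + 1)|ℱ j]) 2 μ with hedef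
  -- the key backward induction
  have key : ∀ m : ℕ, ∀ j : ℕ, j + m = nT →
      eLpNorm (μ[g j - gt j|ℱ j]) 2 μ ≤ ∑ i ∈ Finset.Ico j nT, e i := by
    intro m
    induction m with
    | zero =>
      intro j hj
      have hj' : j = nT := by omega
      subst hj'
      have hzero : g j - gt j = (0 : Ω → ℝ) := by
        funext ω
        show P (τ j ω) ω - P (τtil j ω) ω = 0
        rw [hτtop ω, hτtiltop ω, sub_self]
      rw [hzero, condExp_zero, eLpNorm_zero]
      exact zero_le
    | succ m ih =>
      intro j hj
      have hjlt : j < nT := by omega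
      have hIH := ih (j + 1) (by omega)
      have hj1 : j + 1 ≤ nT := hjlt
      have hInt1 : Integrable (g (j + 1)) μ := hgInt (j + 1) hj1
      have hInt1t : Integrable (gt (j + 1)) μ := hgtInt (j + 1) hj1
      have hIntj : Integrable (g j) μ := hgInt j hjlt.le
      have hIntjt : Integrable (gt j) μ := hgtInt j hjlt.le
      set A : Ω → ℝ := μ[g (j + 1)|ℱ j] with hAdef
      set B : Ω → ℝ := μ[gt (j + 1)|ℱ j] with hBdef
      set Nn : Ω → ℝ := μ[g (j + 1) - gt (j + 1)|ℱ (j + 1)] with hNndef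
      have htower : μ[Nn|ℱ j] =ᵐ[μ] μ[g (j + 1) - gt (j + 1)|ℱ j] :=
        condExp_condExp_of_le (hmono j) (hℱle (j + 1))
      have hAB : μ[g (j + 1) - gt (j + 1)|ℱ j] =ᵐ[μ] A - B := condExp_sub hInt1 hInt1t (ℱ j)
      -- pointwise bound
      have hptwise : ∀ᵐ ω ∂μ, |(μ[g j - gt j|ℱ j]) ω| ≤
          |(Ctil j - B) ω| + |(μ[Nn|ℱ j]) ω| := by
        filter_upwards [condExp_sub hIntj hIntjt (ℱ j), hcondg j hjlt, hcondgt j hjlt, htower, hAB]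
          with ω h1 h2 h3 h4 h5
        rw [h1, Pi.sub_apply, h2, h3, Pi.sub_apply, h4, h5, Pi.sub_apply]
        exact bep_abs_ineq (P j ω) (A ω) (B ω) (Ctil j ω)
      have hCB : AEStronglyMeasurable (Ctil j - B) μ :=
        (((hCmeas j).mono (hℱle j)).sub (stronglyMeasurable_condExp.mono (hℱle j))).aestronglyMeasurable
      have hNnc : AEStronglyMeasurable (μ[Nn|ℱ j]) μ :=
        (stronglyMeasurable_condExp.mono (hℱle j)).aestronglyMeasurable
      have hNnL2 : MemLp Nn 2 μ :=
        (bep_condExp_L2 (hℱle (j + 1)) ((hgL2 (j + 1) hj1).sub (hgtL2 (j + 1) hj1))).1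
      calc eLpNorm (μ[g j - gt j|ℱ j]) 2 μ
          ≤ eLpNorm ((fun ω => ‖(Ctil j - B) ω‖) + fun ω => ‖(μ[Nn|ℱ j]) ω‖) 2 μ := by
            apply eLpNorm_mono_ae
            filter_upwards [hptwise] with ω h
            simp only [Pi.add_apply, Real.norm_eq_abs]
            exact h.trans (le_abs_self _)
        _ ≤ eLpNorm (fun ω => ‖(Ctil j - B) ω‖) 2 μ + eLpNorm (fun ω => ‖(μ[Nn|ℱ j]) ω‖) 2 μ :=
            eLpNorm_add_le hCB.norm hNnc.norm one_le_two
        _ = eLpNorm (Ctil j - B) 2 μ + eLpNorm (μ[Nn|ℱ j]) 2 μ := by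
            rw [eLpNorm_norm, eLpNorm_norm]
        _ ≤ e j + eLpNorm Nn 2 μ := by
            have he : e j = eLpNorm (Ctil j - B) 2 μ := by simp only [hedef, hBdef]
            rw [he]
            exact add_le_add le_rfl (bep_condExp_L2 (hℱle j) hNnL2).2
        _ ≤ e j + ∑ i ∈ Finset.Ico (j + 1) nT, e i := add_le_add le_rfl hIH
        _ = ∑ i ∈ Finset.Ico j nT, e i := (Finset.sum_eq_sum_Ico_succ_bot hjlt e).symm
  -- conclusion
  have hk1 : k + 1 ≤ nT := hk
  have hInt1 : Integrable (g (k + 1)) μ := hgInt (k + 1) hk1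
  have hInt1t : Integrable (gt (k + 1)) μ := hgtInt (k + 1) hk1
  set A : Ω → ℝ := μ[g (k + 1)|ℱ k] with hAdef
  set B : Ω → ℝ := μ[gt (k + 1)|ℱ k] with hBdef
  set Nn : Ω → ℝ := μ[g (k + 1) - gt (k + 1)|ℱ (k + 1)] with hNndef
  have htower : μ[Nn|ℱ k] =ᵐ[μ] μ[g (k + 1) - gt (k + 1)|ℱ k] :=
    condExp_condExp_of_le (hmono k) (hℱle (k + 1))
  have hAB : μ[g (k + 1) - gt (k + 1)|ℱ k] =ᵐ[μ] A - B := condExp_sub hInt1 hInt1t (ℱ k)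
  have hNnL2 : MemLp Nn 2 μ :=
    (bep_condExp_L2 (hℱle (k + 1)) ((hgL2 (k + 1) hk1).sub (hgtL2 (k + 1) hk1))).1
  have hCB : AEStronglyMeasurable (Ctil k - B) μ :=
    (((hCmeas k).mono (hℱle k)).sub (stronglyMeasurable_condExp.mono (hℱle k))).aestronglyMeasurable
  have hBA : AEStronglyMeasurable (B - A) μ :=
    ((stronglyMeasurable_condExp.mono (hℱle k)).sub
      (stronglyMeasurable_condExp.mono (hℱle k))).aestronglyMeasurable
  have hsplit : Ctil k - A = (Ctil k - B) + (B - A) := by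
    funext ω
    simp only [Pi.add_apply, Pi.sub_apply]
    ring
  have hfinal : eLpNorm (Ctil k - A) 2 μ ≤ ∑ i ∈ Finset.Ico k nT, e i := by
    calc eLpNorm (Ctil k - A) 2 μ
        ≤ eLpNorm (Ctil k - B) 2 μ + eLpNorm (B - A) 2 μ := by
          rw [hsplit]; exact eLpNorm_add_le hCB hBA one_le_two
      _ = e k + eLpNorm (A - B) 2 μ := by
          rw [eLpNorm_sub_comm B A]
      _ = e k + eLpNorm (μ[Nn|ℱ k]) 2 μ := by
          rw [eLpNorm_congr_ae (htower.trans hAB)]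
      _ ≤ e k + eLpNorm Nn 2 μ :=
          add_le_add le_rfl (bep_condExp_L2 (hℱle k) hNnL2).2
      _ ≤ e k + ∑ i ∈ Finset.Ico (k + 1) nT, e i :=
          add_le_add le_rfl (key (nT - (k + 1)) (k + 1) (by omega))
      _ = ∑ i ∈ Finset.Ico k nT, e i := (Finset.sum_eq_sum_Ico_succ_bot hk e).symm
  calc eLpNorm (Ctil k - μ[fun ω => P (τ (k + 1) ω) ω|ℱ k]) 2 μ
      = eLpNorm (Ctil k - A) 2 μ := rfl
    _ ≤ ∑ i ∈ Finset.Ico k nT, e i := hfinal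
    _ ≤ 2 * ∑ i ∈ Finset.Ico k nT, e i := le_mul_of_one_le_left zero_le one_le_two
end
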